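/- arXiv:1908.08772 — 11 statements merged into one kernel-verified Lean document; each statement's English description precedes it below -/
import Mathlib

section
/- Let λ > 0 and let f : ℝ → ℝ be monotone and CFL-compatible for λ. Let u : ℤ × ℕ → ℝ (written u_j^n) satisfy, for a fixed j ∈ ℤ and a fixed n ∈ ℕ, the upwind relation u_j^{n+1} = u_j^n − λ(f(u_j^n) − f(u_{j−1}^n)). Then |u_j^{n+1} − u_{j−1}^{n+1}| ≤ |u_j^n − u_{j−1}^n| − |u_j^{n+1} − u_j^n| + |u_{j−1}^{n+1} − u_{j−1}^n|. -/
/-- one-step estimate for the upwind scheme with a monotone,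
CFL-compatible flux. -/
theorem upwind_one_step_estimate
    (lam : ℝ) (hlam : 0 < lam) (f : ℝ → ℝ)
    (hf : ∀ a b : ℝ, a ≤ b → 0 ≤ f b - f a ∧ f b - f a ≤ (b - a) / lam)
    (u : ℤ × ℕ → ℝ) (j : ℤ) (n : ℕ)
    (hscheme : u (j, n + 1) = u (j, n) - lam * (f (u (j, n)) - f (u (j - 1, n)))) :
    |u (j, n + 1) - u (j - 1, n + 1)| ≤
      |u (j, n) - u (j - 1, n)| - |u (j, n + 1) - u (j, n)|
        + |u (j - 1, n + 1) - u (j - 1, n)| := by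
  set a := u (j, n) with ha
  set b := u (j - 1, n) with hb
  set a' := u (j, n + 1) with ha'
  set b' := u (j - 1, n + 1) with hb'
  have key : |a' - b| + |a' - a| ≤ |a - b| := by
    rcases le_total b a with h | h
    · obtain ⟨h1, h2⟩ := hf b a h
      have h2' : lam * (f a - f b) ≤ a - b := by
        rw [mul_comm]; exact (le_div_iff₀ hlam).mp h2
      have hba : b ≤ a' := by nlinarith
      have haa : a' ≤ a := by nlinarith
      rw [abs_of_nonneg (by linarith), abs_of_nonpos (by linarith),
        abs_of_nonneg (by linarith)]
      linarith
    · obtain ⟨h1, h2⟩ := hf a b h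
      have h2' : lam * (f b - f a) ≤ b - a := by
        rw [mul_comm]; exact (le_div_iff₀ hlam).mp h2
      have hba : a' ≤ b := by nlinarith
      have haa : a ≤ a' := by nlinarith
      rw [abs_of_nonpos (by linarith), abs_of_nonneg (by linarith),
        abs_of_nonpos (by linarith)]
      linarith
  have tri : |a' - b'| ≤ |a' - b| + |b - b'| := abs_sub_le a' b b'
  have hcomm : |b - b'| = |b' - b| := abs_sub_comm b b'
  linarith
end

section
/- Let λ > 0 and let f : ℝ → ℝ be monotone and CFL-compatible for λ. Let u : ℤ × ℕ → ℝ (written u_j^n) and let j ∈ ℤ, M ∈ ℕ be such that the upwind relation u_j^{n+1} = u_j^n − λ(f(u_j^n) − f(u_{j−1}^n)) holds for all 0 ≤ n ≤ M (only at column j; no assumption is made on how the values u_{j−1}^n arise). Then ∑_{n=0}^{M} |u_j^{n+1} − u_j^n| ≤ |u_j^0 − u_{j−1}^0| + ∑_{n=0}^{M−1} |u_{j−1}^{n+1} − u_{j−1}^n|. -/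
/-- temporal variation of one column of the upwind scheme is
controlled by the initial jump plus the temporal variation of the neighboring
column. -/
theorem upwind_temporal_variation_column_estimate
    (lam : ℝ) (hlam : 0 < lam) (f : ℝ → ℝ)
    (hf : ∀ a b : ℝ, a ≤ b → 0 ≤ f b - f a ∧ f b - f a ≤ (b - a) / lam)
    (u : ℤ × ℕ → ℝ) (j : ℤ) (M : ℕ)
    (hscheme : ∀ n : ℕ, n ≤ M →
      u (j, n + 1) = u (j, n) - lam * (f (u (j, n)) - f (u (j - 1, n)))) :
    ∑ n ∈ Finset.range (M + 1), |u (j, n + 1) - u (j, n)| ≤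
      |u (j, 0) - u (j - 1, 0)|
        + ∑ n ∈ Finset.range M, |u (j - 1, n + 1) - u (j - 1, n)| := by
  -- key algebraic identity
  have key : ∀ a c : ℝ,
      |a - lam * (f a - f c) - c| + |lam * (f a - f c)| = |a - c| := by
    intro a c
    rcases le_total c a with h | h
    · obtain ⟨h1, h2⟩ := hf c a h
      have h2' : lam * (f a - f c) ≤ a - c := by
        calc lam * (f a - f c) ≤ lam * ((a - c) / lam) := by
              exact mul_le_mul_of_nonneg_left h2 hlam.le
          _ = a - c := by field_simp
      have h1' : 0 ≤ lam * (f a - f c) := mul_nonneg hlam.le h1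
      rw [abs_of_nonneg (by linarith), abs_of_nonneg h1', abs_of_nonneg (by linarith)]
      ring
    · obtain ⟨h1, h2⟩ := hf a c h
      have h2' : lam * (f c - f a) ≤ c - a := by
        calc lam * (f c - f a) ≤ lam * ((c - a) / lam) := by
              exact mul_le_mul_of_nonneg_left h2 hlam.le
          _ = c - a := by field_simp
      have h1' : 0 ≤ lam * (f c - f a) := mul_nonneg hlam.le h1
      rw [abs_of_nonpos (by nlinarith), abs_of_nonpos (by nlinarith),
        abs_of_nonpos (by linarith)]
      ring
  -- main induction: partial sums plus current jump are controlled
  have main : ∀ N : ℕ, N ≤ M →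
      (∑ n ∈ Finset.range N, |u (j, n + 1) - u (j, n)|)
        + |u (j, N) - u (j - 1, N)| ≤
      |u (j, 0) - u (j - 1, 0)|
        + ∑ n ∈ Finset.range N, |u (j - 1, n + 1) - u (j - 1, n)| := by
    intro N
    induction N with
    | zero => intro _; simp
    | succ N ih =>
      intro hN
      have hNM : N ≤ M := Nat.le_of_succ_le hN
      have hs := hscheme N hNM
      have hk := key (u (j, N)) (u (j - 1, N))
      have hstep : |u (j, N + 1) - u (j, N)| + |u (j, N + 1) - u (j - 1, N)|
          = |u (j, N) - u (j - 1, N)| := by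
        rw [hs]
        have : u (j, N) - lam * (f (u (j, N)) - f (u (j - 1, N))) - u (j, N)
            = -(lam * (f (u (j, N)) - f (u (j - 1, N)))) := by ring
        rw [this, abs_neg]
        linarith [hk]
      have htri : |u (j, N + 1) - u (j - 1, N + 1)| ≤
          |u (j, N + 1) - u (j - 1, N)| + |u (j - 1, N + 1) - u (j - 1, N)| := by
        have := abs_sub_le (u (j, N + 1)) (u (j - 1, N)) (u (j - 1, N + 1))
        calc |u (j, N + 1) - u (j - 1, N + 1)|
            ≤ |u (j, N + 1) - u (j - 1, N)| + |u (j - 1, N) - u (j - 1, N + 1)| := this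
          _ = |u (j, N + 1) - u (j - 1, N)| + |u (j - 1, N + 1) - u (j - 1, N)| := by
              rw [abs_sub_comm (u (j - 1, N))]
      rw [Finset.sum_range_succ, Finset.sum_range_succ]
      have := ih hNM
      linarith
  have hM := main M le_rfl
  have hlast : |u (j, M + 1) - u (j, M)| ≤ |u (j, M) - u (j - 1, M)| := by
    have hk := key (u (j, M)) (u (j - 1, M))
    have hs := hscheme M le_rfl
    rw [hs]
    have : u (j, M) - lam * (f (u (j, M)) - f (u (j - 1, M))) - u (j, M)
        = -(lam * (f (u (j, M)) - f (u (j - 1, M)))) := by ring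
    rw [this, abs_neg]
    have := abs_nonneg (u (j, M) - lam * (f (u (j, M)) - f (u (j - 1, M))) - u (j - 1, M))
    linarith
  rw [Finset.sum_range_succ]
  linarith
end

section
/- Let λ > 0 and let f : ℝ → ℝ be monotone and CFL-compatible for λ. Let u : ℤ × ℕ → ℝ (written u_j^n), let j ∈ ℤ and M ∈ ℕ, and assume the upwind relation u_l^{n+1} = u_l^n − λ(f(u_l^n) − f(u_{l−1}^n)) holds for all columns l with j − M ≤ l ≤ j and all 0 ≤ n ≤ M. Then the temporal variation of column j is bounded by the discrete total variation of the initial data: ∑_{n=0}^{M} |u_j^{n+1} − u_j^n| ≤ ∑_{i=j−M}^{j} |u_i^0 − u_{i−1}^0|. -/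
private lemma upwind_abs_key (lam : ℝ) (hlam : 0 < lam) (f : ℝ → ℝ)
    (hf : ∀ a b : ℝ, a ≤ b → 0 ≤ f b - f a ∧ f b - f a ≤ (b - a) / lam)
    (a b : ℝ) : |(b - a) - lam * (f b - f a)| = |b - a| - lam * |f b - f a| := by
  rcases le_total a b with h | h
  · obtain ⟨h0, h1⟩ := hf a b h
    have h1' : lam * (f b - f a) ≤ b - a := by
      have := (le_div_iff₀ hlam).mp h1
      linarith
    rw [abs_of_nonneg (by nlinarith : (0:ℝ) ≤ (b - a) - lam * (f b - f a)),
      abs_of_nonneg (by linarith : (0:ℝ) ≤ b - a), abs_of_nonneg h0]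
  · obtain ⟨h0, h1⟩ := hf b a h
    have h1' : lam * (f a - f b) ≤ a - b := by
      have := (le_div_iff₀ hlam).mp h1
      linarith
    rw [abs_of_nonpos (by nlinarith : (b - a) - lam * (f b - f a) ≤ 0),
      abs_of_nonpos (by linarith : b - a ≤ 0),
      abs_of_nonpos (by linarith : f b - f a ≤ 0)]
    ring

private lemma upwind_tel (h : ℤ → ℝ) (a : ℤ) (k : ℕ) :
    ∑ i ∈ Finset.Icc a (a + (k : ℤ)), (h (i - 1) - h i) = h (a - 1) - h (a + (k : ℤ)) := by
  induction k with
  | zero => simp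
  | succ k ih =>
    have hc : a + ((k + 1 : ℕ) : ℤ) = a + (k : ℤ) + 1 := by push_cast; ring
    have hins : Finset.Icc a (a + (k : ℤ) + 1)
        = insert (a + (k : ℤ) + 1) (Finset.Icc a (a + (k : ℤ))) := by
      ext x; simp; omega
    rw [hc, hins, Finset.sum_insert (by rw [Finset.mem_Icc]; omega), ih,
      show a + (k : ℤ) + 1 - 1 = a + (k : ℤ) by ring]
    ring

/-- the temporal variation of column `j` of the upwind scheme up
to time level `M` is bounded by the discrete total variation of the initial
data over the columns `j - M, …, j`. -/
theorem upwind_temporal_variation_bounded_by_initial_TV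
    (lam : ℝ) (hlam : 0 < lam) (f : ℝ → ℝ)
    (hf : ∀ a b : ℝ, a ≤ b → 0 ≤ f b - f a ∧ f b - f a ≤ (b - a) / lam)
    (u : ℤ × ℕ → ℝ) (j : ℤ) (M : ℕ)
    (hscheme : ∀ l : ℤ, j - M ≤ l → l ≤ j → ∀ n : ℕ, n ≤ M →
      u (l, n + 1) = u (l, n) - lam * (f (u (l, n)) - f (u (l - 1, n)))) :
    ∑ n ∈ Finset.range (M + 1), |u (j, n + 1) - u (j, n)| ≤
      ∑ i ∈ Finset.Icc (j - M) j, |u (i, 0) - u (i - 1, 0)| := by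
  set g : ℤ → ℕ → ℝ := fun i n => lam * |f (u (i, n)) - f (u (i - 1, n))| with hg
  set D : ℤ → ℕ → ℝ := fun i n => |u (i, n) - u (i - 1, n)| with hD
  have hgD : ∀ i n, g i n ≤ D i n := by
    intro i n
    have h := upwind_abs_key lam hlam f hf (u (i-1, n)) (u (i, n))
    have habs : 0 ≤ |u (i, n) - u (i-1, n)| - lam * |f (u (i, n)) - f (u (i-1, n))| := by
      rw [← h]; positivity
    simp only [hg, hD]
    linarith
  -- one-step TVD estimate
  have hstep : ∀ i : ℤ, j - M + 1 ≤ i → i ≤ j → ∀ n : ℕ, n ≤ M →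
      D i (n + 1) ≤ D i n - g i n + g (i - 1) n := by
    intro i hi1 hi2 n hn
    have e1 := hscheme i (by omega) hi2 n hn
    have e2 := hscheme (i - 1) (by omega) (by omega) n hn
    have hsplit : u (i, n+1) - u (i-1, n+1)
        = ((u (i, n) - u (i-1, n)) - lam * (f (u (i, n)) - f (u (i-1, n))))
          + lam * (f (u (i-1, n)) - f (u (i-1-1, n))) := by
      rw [e1, e2]; ring
    simp only [hD, hg]
    calc |u (i, n+1) - u (i-1, n+1)|
        ≤ |(u (i, n) - u (i-1, n)) - lam * (f (u (i, n)) - f (u (i-1, n)))|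
          + |lam * (f (u (i-1, n)) - f (u (i-1-1, n)))| := by
          rw [hsplit]; exact abs_add_le _ _
      _ = (|u (i, n) - u (i-1, n)| - lam * |f (u (i, n)) - f (u (i-1, n))|)
          + lam * |f (u (i-1, n)) - f (u (i-1-1, n))| := by
          rw [upwind_abs_key lam hlam f hf, abs_mul, abs_of_pos hlam]
      _ = _ := by ring
  -- main downward induction
  have key : ∀ d : ℕ, d ≤ M →
      ∑ k ∈ Finset.Icc (M - d) M, g j k ≤
        ∑ i ∈ Finset.Icc (j - (d : ℤ)) j, D i (M - d) := by
    intro d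
    induction d with
    | zero =>
      intro _
      simpa using hgD j M
    | succ d ih =>
      intro hdM
      have ihs := ih (by omega)
      set n : ℕ := M - (d + 1) with hn
      have hn1 : n + 1 = M - d := by omega
      have hsplitT : Finset.Icc (M - (d+1)) M = insert n (Finset.Icc (M - d) M) := by
        ext x; simp [hn]; omega
      rw [hsplitT, Finset.sum_insert (by simp [hn]; omega)]
      have h2 : ∑ i ∈ Finset.Icc (j - (d : ℤ)) j, D i (M - d)
          ≤ ∑ i ∈ Finset.Icc (j - (d : ℤ)) j, (D i n - g i n + g (i - 1) n) := by
        apply Finset.sum_le_sum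
        intro i hi
        rw [Finset.mem_Icc] at hi
        have := hstep i (by omega) hi.2 n (by omega)
        rwa [hn1] at this
      have htel : ∑ i ∈ Finset.Icc (j - (d : ℤ)) j, (g (i - 1) n - g i n)
          = g (j - (d : ℤ) - 1) n - g j n := by
        have := upwind_tel (fun i => g i n) (j - (d : ℤ)) d
        rw [show j - (d : ℤ) + (d : ℤ) = j by ring] at this
        simpa using this
      have h3 : ∑ i ∈ Finset.Icc (j - (d : ℤ)) j, (D i n - g i n + g (i - 1) n)
          = ∑ i ∈ Finset.Icc (j - (d : ℤ)) j, D i n + (g (j - (d:ℤ) - 1) n - g j n) := by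
        calc ∑ i ∈ Finset.Icc (j - (d : ℤ)) j, (D i n - g i n + g (i - 1) n)
            = ∑ i ∈ Finset.Icc (j - (d : ℤ)) j, (D i n + (g (i - 1) n - g i n)) := by
              apply Finset.sum_congr rfl; intro i _; ring
          _ = ∑ i ∈ Finset.Icc (j - (d : ℤ)) j, D i n
              + ∑ i ∈ Finset.Icc (j - (d : ℤ)) j, (g (i - 1) n - g i n) :=
              Finset.sum_add_distrib
          _ = _ := by rw [htel]
      have hsplitS : Finset.Icc (j - ((d:ℕ)+1 : ℤ)) j
          = insert (j - (d:ℤ) - 1) (Finset.Icc (j - (d : ℤ)) j) := by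
        ext x; simp; omega
      have h4 : ∑ i ∈ Finset.Icc (j - ((d+1 : ℕ) : ℤ)) j, D i n
          = D (j - (d:ℤ) - 1) n + ∑ i ∈ Finset.Icc (j - (d : ℤ)) j, D i n := by
        rw [show ((d+1 : ℕ) : ℤ) = (d:ℤ) + 1 by push_cast; ring, hsplitS,
          Finset.sum_insert (by simp)]
      have h5 := hgD (j - (d:ℤ) - 1) n
      rw [h4]
      linarith
  -- conclude
  have hL : ∀ n ∈ Finset.range (M + 1), |u (j, n + 1) - u (j, n)| = g j n := by
    intro n hn
    rw [Finset.mem_range] at hn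
    rw [hscheme j (by omega) le_rfl n (by omega)]
    simp only [hg]
    rw [show u (j, n) - lam * (f (u (j, n)) - f (u (j - 1, n))) - u (j, n)
        = -(lam * (f (u (j, n)) - f (u (j - 1, n)))) by ring,
      abs_neg, abs_mul, abs_of_pos hlam]
  rw [Finset.sum_congr rfl hL]
  have hr : Finset.range (M + 1) = Finset.Icc (M - M) M := by
    ext x; simp
  rw [hr]
  have := key M le_rfl
  simpa using this
end

section
/- Let λ > 0 and 0 < α ≤ L with λL ≤ 1, and let f, g : ℝ → ℝ satisfy α(b − a) ≤ f(b) − f(a) ≤ L(b − a) and α(b − a) ≤ g(b) − g(a) ≤ L(b − a) for all real numbers a ≤ b. Let u : ℤ × ℕ → ℝ (written u_j^n) satisfy: u_j^{n+1} = u_j^n − λ(g(u_j^n) − g(u_{j−1}^n)) for all j ≤ −1 and n ≥ 0; u_j^{n+1} = u_j^n − λ(f(u_j^n) − f(u_{j−1}^n)) for all j ≥ 1 and n ≥ 0; and the discrete Rankine–Hugoniot condition f(u_0^n) = g(u_{−1}^n) for all n ≥ 0. Suppose V ≥ 0 is such that ∑_{i=a}^{b} |u_i^0 − u_{i−1}^0|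 ≤ V for all integers a ≤ b. Then for every j ∈ ℤ and every M ∈ ℕ, the temporal variation of the numerical solution is bounded: ∑_{n=0}^{M} |u_j^{n+1} − u_j^n| ≤ (1 + L/α)·V. -/
/-- If `h` is `alpha`-monotone and `L`-Lipschitz and `lam * L ≤ 1`, the upwind update
contracts the absolute difference exactly. -/
private lemma two_flux_key_abs {lam alpha L : ℝ} (hlam : 0 < lam) (halpha : 0 < alpha)
    (hCFL : lam * L ≤ 1) {h : ℝ → ℝ}
    (hh : ∀ a b : ℝ, a ≤ b → alpha * (b - a) ≤ h b - h a ∧ h b - h a ≤ L * (b - a))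
    (x y : ℝ) :
    |x - y - lam * (h x - h y)| = |x - y| - lam * |h x - h y| := by
  rcases le_total y x with hxy | hxy
  · obtain ⟨h1, h2⟩ := hh y x hxy
    have h0 : 0 ≤ h x - h y := by nlinarith
    have h3 : lam * (h x - h y) ≤ x - y := by nlinarith
    rw [abs_of_nonneg (by linarith : (0:ℝ) ≤ x - y - lam * (h x - h y)),
      abs_of_nonneg (by linarith : (0:ℝ) ≤ x - y), abs_of_nonneg h0]
  · obtain ⟨h1, h2⟩ := hh x y hxy
    have h0 : h x - h y ≤ 0 := by nlinarith
    have h3 : lam * (h y - h x) ≤ y - x := by nlinarith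
    rw [abs_of_nonpos (by linarith : x - y - lam * (h x - h y) ≤ 0),
      abs_of_nonpos (by linarith : x - y ≤ 0), abs_of_nonpos h0]
    ring

private lemma two_flux_abs_bounds {alpha L : ℝ} (halpha : 0 < alpha) {h : ℝ → ℝ}
    (hh : ∀ a b : ℝ, a ≤ b → alpha * (b - a) ≤ h b - h a ∧ h b - h a ≤ L * (b - a))
    (x y : ℝ) :
    alpha * |x - y| ≤ |h x - h y| ∧ |h x - h y| ≤ L * |x - y| := by
  rcases le_total y x with hxy | hxy
  · obtain ⟨h1, h2⟩ := hh y x hxy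
    have h0 : 0 ≤ h x - h y := by nlinarith
    rw [abs_of_nonneg (by linarith : (0:ℝ) ≤ x - y), abs_of_nonneg h0]
    exact ⟨h1, h2⟩
  · obtain ⟨h1, h2⟩ := hh x y hxy
    have h0 : h x - h y ≤ 0 := by nlinarith
    rw [abs_of_nonpos (by linarith : x - y ≤ 0), abs_of_nonpos h0]
    constructor <;> nlinarith

private lemma two_flux_Icc_insert_bot {a b : ℤ} (h : a - 1 ≤ b) :
    Finset.Icc (a - 1) b = insert (a - 1) (Finset.Icc a b) := by
  ext x; simp only [Finset.mem_Icc, Finset.mem_insert]; omega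

private lemma two_flux_notmem_bot {a b : ℤ} : (a - 1) ∉ Finset.Icc a b := by
  simp only [Finset.mem_Icc]; omega

private lemma two_flux_sum_shift (F : ℤ → ℝ) (a b : ℤ) :
    ∑ i ∈ Finset.Icc a b, F (i - 1) = ∑ i ∈ Finset.Icc (a - 1) (b - 1), F i := by
  rw [show a - 1 = a + (-1) by ring, show b - 1 = b + (-1) by ring,
    ← Finset.map_add_right_Icc, Finset.sum_map]
  simp [addRightEmbedding, sub_eq_add_neg]

/-- bound on the temporal total variation for the two-flux upwind
scheme with the discrete Rankine–Hugoniot condition at the interface. -/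
theorem two_flux_upwind_temporal_variation_bound
    (lam alpha L : ℝ) (hlam : 0 < lam) (halpha : 0 < alpha) (halphaL : alpha ≤ L)
    (hCFL : lam * L ≤ 1) (f g : ℝ → ℝ)
    (hf : ∀ a b : ℝ, a ≤ b → alpha * (b - a) ≤ f b - f a ∧ f b - f a ≤ L * (b - a))
    (hg : ∀ a b : ℝ, a ≤ b → alpha * (b - a) ≤ g b - g a ∧ g b - g a ≤ L * (b - a))
    (u : ℤ × ℕ → ℝ)
    (hleft : ∀ j : ℤ, j ≤ -1 → ∀ n : ℕ,
      u (j, n + 1) = u (j, n) - lam * (g (u (j, n)) - g (u (j - 1, n))))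
    (hright : ∀ j : ℤ, 1 ≤ j → ∀ n : ℕ,
      u (j, n + 1) = u (j, n) - lam * (f (u (j, n)) - f (u (j - 1, n))))
    (hRH : ∀ n : ℕ, f (u (0, n)) = g (u (-1, n)))
    (V : ℝ) (hV : 0 ≤ V)
    (hTV : ∀ a b : ℤ, a ≤ b →
      ∑ i ∈ Finset.Icc a b, |u (i, 0) - u (i - 1, 0)| ≤ V) :
    ∀ (j : ℤ) (M : ℕ),
      ∑ n ∈ Finset.range (M + 1), |u (j, n + 1) - u (j, n)| ≤ (1 + L / alpha) * V := by
  intro j M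
  have hL : 0 < L := lt_of_lt_of_le halpha halphaL
  -- shorthand sums
  set D : ℤ → ℕ → ℝ := fun i n => |u (i, n) - u (i - 1, n)| with hD
  set Sg : ℤ → ℝ :=
    fun i => ∑ n ∈ Finset.range (M + 1), lam * |g (u (i, n)) - g (u (i - 1, n))| with hSg
  set Sf : ℤ → ℝ :=
    fun i => ∑ n ∈ Finset.range (M + 1), lam * |f (u (i, n)) - f (u (i - 1, n))| with hSf
  have hDnn : ∀ i n, 0 ≤ D i n := fun i n => abs_nonneg _
  have hSgnn : ∀ i, 0 ≤ Sg i := by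
    intro i; rw [hSg]
    exact Finset.sum_nonneg fun n _ => by positivity
  -- the TV sums of initial data over intervals are all ≤ V
  have hTV' : ∀ a b : ℤ, ∑ m ∈ Finset.Icc a b, D m 0 ≤ V := by
    intro a b
    rcases le_or_gt a b with hab | hab
    · exact hTV a b hab
    · rw [Finset.Icc_eq_empty (by omega), Finset.sum_empty]; exact hV
  -- one-step inequality, left of the interface
  have hstepL : ∀ i : ℤ, i ≤ -1 → ∀ n : ℕ,
      D i (n + 1) ≤ D i n - lam * |g (u (i, n)) - g (u (i - 1, n))|
        + lam * |g (u (i - 1, n)) - g (u (i - 2, n))| := by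
    intro i hi n
    have e1 := hleft i hi n
    have e2 := hleft (i - 1) (by omega) n
    rw [show i - 1 - 1 = i - 2 by ring] at e2
    have hrepr : u (i, n + 1) - u (i - 1, n + 1)
        = (u (i, n) - u (i - 1, n) - lam * (g (u (i, n)) - g (u (i - 1, n))))
          + lam * (g (u (i - 1, n)) - g (u (i - 2, n))) := by
      rw [e1, e2]; ring
    have htri : D i (n + 1)
        ≤ |u (i, n) - u (i - 1, n) - lam * (g (u (i, n)) - g (u (i - 1, n)))|
          + |lam * (g (u (i - 1, n)) - g (u (i - 2, n)))| := by
      rw [hD]; dsimp only; rw [hrepr]; exact abs_add_le _ _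
    rw [two_flux_key_abs hlam halpha hCFL hg, abs_mul, abs_of_pos hlam] at htri
    simpa [hD] using htri
  -- one-step inequality, right of the interface
  have hstepR : ∀ i : ℤ, 2 ≤ i → ∀ n : ℕ,
      D i (n + 1) ≤ D i n - lam * |f (u (i, n)) - f (u (i - 1, n))|
        + lam * |f (u (i - 1, n)) - f (u (i - 2, n))| := by
    intro i hi n
    have e1 := hright i (by omega) n
    have e2 := hright (i - 1) (by omega) n
    rw [show i - 1 - 1 = i - 2 by ring] at e2
    have hrepr : u (i, n + 1) - u (i - 1, n + 1)
        = (u (i, n) - u (i - 1, n) - lam * (f (u (i, n)) - f (u (i - 1, n))))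
          + lam * (f (u (i - 1, n)) - f (u (i - 2, n))) := by
      rw [e1, e2]; ring
    have htri : D i (n + 1)
        ≤ |u (i, n) - u (i - 1, n) - lam * (f (u (i, n)) - f (u (i - 1, n)))|
          + |lam * (f (u (i - 1, n)) - f (u (i - 2, n)))| := by
      rw [hD]; dsimp only; rw [hrepr]; exact abs_add_le _ _
    rw [two_flux_key_abs hlam halpha hCFL hf, abs_mul, abs_of_pos hlam] at htri
    simpa [hD] using htri
  -- summed-in-time recursion, left
  have hSgrec : ∀ i : ℤ, i ≤ -1 → Sg i ≤ D i 0 + Sg (i - 1) := by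
    intro i hi
    have h1 : Sg i ≤ ∑ n ∈ Finset.range (M + 1),
        ((D i n - D i (n + 1)) + lam * |g (u (i - 1, n)) - g (u (i - 1 - 1, n))|) := by
      rw [hSg]
      refine Finset.sum_le_sum fun n _ => ?_
      have := hstepL i hi n
      rw [show i - 1 - 1 = i - 2 by ring]
      linarith
    rw [Finset.sum_add_distrib, Finset.sum_range_sub' (fun n => D i n) (M + 1)] at h1
    have h2 : D i 0 - D i (M + 1) ≤ D i 0 := by linarith [hDnn i (M + 1)]
    calc Sg i ≤ (D i 0 - D i (M + 1)) + Sg (i - 1) := h1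
      _ ≤ D i 0 + Sg (i - 1) := by linarith
  -- summed-in-time recursion, right (for i ≥ 2)
  have hSfrec : ∀ i : ℤ, 2 ≤ i → Sf i ≤ D i 0 + Sf (i - 1) := by
    intro i hi
    have h1 : Sf i ≤ ∑ n ∈ Finset.range (M + 1),
        ((D i n - D i (n + 1)) + lam * |f (u (i - 1, n)) - f (u (i - 1 - 1, n))|) := by
      rw [hSf]
      refine Finset.sum_le_sum fun n _ => ?_
      have := hstepR i hi n
      rw [show i - 1 - 1 = i - 2 by ring]
      linarith
    rw [Finset.sum_add_distrib, Finset.sum_range_sub' (fun n => D i n) (M + 1)] at h1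
    calc Sf i ≤ (D i 0 - D i (M + 1)) + Sf (i - 1) := h1
      _ ≤ D i 0 + Sf (i - 1) := by linarith [hDnn i (M + 1)]
  -- iterated recursion to the left
  have hSgiter : ∀ i0 : ℤ, i0 ≤ -1 → ∀ i : ℤ, i ≤ i0 →
      Sg i0 ≤ (∑ m ∈ Finset.Icc (i + 1) i0, D m 0) + Sg i := by
    intro i0 hi0
    refine Int.le_induction_down ?_ ?_
    · rw [Finset.Icc_eq_empty (by omega), Finset.sum_empty, zero_add]
    · intro i hi ih
      have hrec := hSgrec i (by omega)
      have hins : Finset.Icc (i - 1 + 1) i0 = insert i (Finset.Icc (i + 1) i0) := by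
        ext x; simp only [Finset.mem_Icc, Finset.mem_insert]; omega
      have hnot : i ∉ Finset.Icc (i + 1) i0 := by
        simp only [Finset.mem_Icc]; omega
      rw [hins, Finset.sum_insert hnot]
      calc Sg i0 ≤ (∑ m ∈ Finset.Icc (i + 1) i0, D m 0) + Sg i := ih
        _ ≤ (∑ m ∈ Finset.Icc (i + 1) i0, D m 0) + (D i 0 + Sg (i - 1)) := by linarith
        _ = D i 0 + (∑ m ∈ Finset.Icc (i + 1) i0, D m 0) + Sg (i - 1) := by ring
  -- spatial TVD estimate on the left region
  have hTVD : ∀ n : ℕ, ∀ a b : ℤ, b ≤ -1 →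
      ∑ m ∈ Finset.Icc a b, D m n ≤ ∑ m ∈ Finset.Icc (a - (n : ℤ)) b, D m 0 := by
    intro n
    induction n with
    | zero => intro a b _; simp
    | succ n ih =>
      intro a b hb
      rcases le_or_gt a b with hab | hab
      · have h1 : ∑ m ∈ Finset.Icc a b, D m (n + 1)
            ≤ ∑ m ∈ Finset.Icc a b,
              (D m n - lam * |g (u (m, n)) - g (u (m - 1, n))|
                + lam * |g (u (m - 1, n)) - g (u (m - 2, n))|) := by
          refine Finset.sum_le_sum fun m hm => ?_
          exact hstepL m (by rw [Finset.mem_Icc] at hm; omega) n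
        set X : ℤ → ℝ := fun m => lam * |g (u (m, n)) - g (u (m - 1, n))| with hX
        have hXnn : ∀ m, 0 ≤ X m := fun m => by rw [hX]; positivity
        have hshape : ∀ m : ℤ,
            D m n - lam * |g (u (m, n)) - g (u (m - 1, n))|
              + lam * |g (u (m - 1, n)) - g (u (m - 2, n))|
            = D m n - X m + X (m - 1) := by
          intro m; rw [hX]; dsimp only
          rw [show m - 1 - 1 = m - 2 by ring]
        have h2 : ∑ m ∈ Finset.Icc a b,
            (D m n - lam * |g (u (m, n)) - g (u (m - 1, n))|
              + lam * |g (u (m - 1, n)) - g (u (m - 2, n))|)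
            = (∑ m ∈ Finset.Icc a b, D m n)
              - (∑ m ∈ Finset.Icc a b, X m) + ∑ m ∈ Finset.Icc a b, X (m - 1) := by
          rw [← Finset.sum_sub_distrib, ← Finset.sum_add_distrib]
          exact Finset.sum_congr rfl fun m _ => by rw [hshape]
        have h3 : ∑ m ∈ Finset.Icc a b, X (m - 1)
            = ∑ m ∈ Finset.Icc (a - 1) (b - 1), X m := two_flux_sum_shift X a b
        -- telescoping of the two shifted sums
        have h4 : ∑ m ∈ Finset.Icc (a - 1) (b - 1), X m
            = X (a - 1) + ∑ m ∈ Finset.Icc a (b - 1), X m := by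
          rw [two_flux_Icc_insert_bot (by omega), Finset.sum_insert two_flux_notmem_bot]
        have h5 : ∑ m ∈ Finset.Icc a b, X m
            = X b + ∑ m ∈ Finset.Icc a (b - 1), X m := by
          have hins : Finset.Icc a b = insert b (Finset.Icc a (b - 1)) := by
            ext x; simp only [Finset.mem_Icc, Finset.mem_insert]; omega
          have hnot : b ∉ Finset.Icc a (b - 1) := by
            simp only [Finset.mem_Icc]; omega
          rw [hins, Finset.sum_insert hnot]
        have h6 : X (a - 1) ≤ D (a - 1) n := by
          have hb2 := (two_flux_abs_bounds halpha hg (u (a - 1, n)) (u (a - 1 - 1, n))).2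
          have : X (a - 1) ≤ lam * (L * D (a - 1) n) := by
            rw [hX]; dsimp only
            exact mul_le_mul_of_nonneg_left hb2 hlam.le
          nlinarith [hDnn (a - 1) n, hlam.le]
        have h7 : ∑ m ∈ Finset.Icc a b, D m (n + 1)
            ≤ ∑ m ∈ Finset.Icc (a - 1) b, D m n := by
          have hsplit : ∑ m ∈ Finset.Icc (a - 1) b, D m n
              = D (a - 1) n + ∑ m ∈ Finset.Icc a b, D m n := by
            rw [two_flux_Icc_insert_bot (by omega), Finset.sum_insert two_flux_notmem_bot]
          have hXb : 0 ≤ X b := hXnn b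
          calc ∑ m ∈ Finset.Icc a b, D m (n + 1)
              ≤ (∑ m ∈ Finset.Icc a b, D m n)
                - (∑ m ∈ Finset.Icc a b, X m) + ∑ m ∈ Finset.Icc a b, X (m - 1) := by
                rw [← h2]; exact h1
            _ = (∑ m ∈ Finset.Icc a b, D m n) + (X (a - 1) - X b) := by
                rw [h3, h4, h5]; ring
            _ ≤ (∑ m ∈ Finset.Icc a b, D m n) + D (a - 1) n := by linarith
            _ = ∑ m ∈ Finset.Icc (a - 1) b, D m n := by rw [hsplit]; ring
        have h8 := ih (a - 1) b hb
        have hidx : a - 1 - (n : ℤ) = a - ((n : ℕ) + 1 : ℕ) := by push_cast; ring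
        calc ∑ m ∈ Finset.Icc a b, D m (n + 1)
            ≤ ∑ m ∈ Finset.Icc (a - 1) b, D m n := h7
          _ ≤ ∑ m ∈ Finset.Icc (a - 1 - (n : ℤ)) b, D m 0 := h8
          _ = ∑ m ∈ Finset.Icc (a - ((n + 1 : ℕ) : ℤ)) b, D m 0 := by
              rw [show a - 1 - (n : ℤ) = a - ((n + 1 : ℕ) : ℤ) by push_cast; ring]
      · rw [Finset.Icc_eq_empty (by omega), Finset.sum_empty]
        exact Finset.sum_nonneg fun m _ => hDnn m 0
  -- pointwise bound on spatial differences in the left region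
  have hDbound : ∀ i : ℤ, i ≤ -1 → ∀ n : ℕ, n ≤ M →
      D i n ≤ ∑ m ∈ Finset.Icc (i - (M : ℤ)) i, D m 0 := by
    intro i hi n hn
    have h1 := hTVD n i i hi
    rw [Finset.Icc_self, Finset.sum_singleton] at h1
    refine h1.trans (Finset.sum_le_sum_of_subset_of_nonneg ?_ fun m _ _ => hDnn m 0)
    exact Finset.Icc_subset_Icc (by omega) le_rfl
  -- smallness of Sg far to the left
  have hSgsmall : ∀ i : ℤ, i ≤ -1 →
      Sg i ≤ lam * L * ((M : ℝ) + 1) * ∑ m ∈ Finset.Icc (i - (M : ℤ)) i, D m 0 := by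
    intro i hi
    have h1 : Sg i ≤ ∑ _n ∈ Finset.range (M + 1),
        lam * L * ∑ m ∈ Finset.Icc (i - (M : ℤ)) i, D m 0 := by
      rw [hSg]
      refine Finset.sum_le_sum fun n hn => ?_
      have hn' : n ≤ M := by
        rw [Finset.mem_range] at hn; omega
      have hb2 := (two_flux_abs_bounds halpha hg (u (i, n)) (u (i - 1, n))).2
      have hDb := hDbound i hi n hn'
      calc lam * |g (u (i, n)) - g (u (i - 1, n))| ≤ lam * (L * D i n) :=
            mul_le_mul_of_nonneg_left hb2 hlam.le
        _ = lam * L * D i n := by ring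
        _ ≤ lam * L * ∑ m ∈ Finset.Icc (i - (M : ℤ)) i, D m 0 :=
            mul_le_mul_of_nonneg_left hDb (by positivity)
    rw [Finset.sum_const, Finset.card_range, nsmul_eq_mul] at h1
    calc Sg i ≤ ((M + 1 : ℕ) : ℝ) * (lam * L * ∑ m ∈ Finset.Icc (i - (M : ℤ)) i, D m 0) := h1
      _ = lam * L * ((M : ℝ) + 1) * ∑ m ∈ Finset.Icc (i - (M : ℤ)) i, D m 0 := by
          push_cast; ring
  -- the main bound on the left: Sg i0 ≤ V
  have hSgV : ∀ i0 : ℤ, i0 ≤ -1 → Sg i0 ≤ V := by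
    intro i0 hi0
    have hmain : ∀ ε : ℝ, 0 < ε → Sg i0 ≤ V + ε := by
      intro ε hε
      set C : ℝ := lam * L * ((M : ℝ) + 1) with hC
      have hCpos : 0 < C := by rw [hC]; positivity
      set ε' : ℝ := ε / C with hε'def
      have hε' : 0 < ε' := by rw [hε'def]; positivity
      set T : ℤ → ℝ := fun a => ∑ m ∈ Finset.Icc a (-1), D m 0 with hT
      have hTnn : ∀ a, 0 ≤ T a := by
        intro a; rw [hT]; exact Finset.sum_nonneg fun m _ => hDnn m 0
      have hTle : ∀ a, T a ≤ V := fun a => hTV' a (-1)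
      have hbdd : BddAbove (Set.range T) := ⟨V, by rintro x ⟨a, rfl⟩; exact hTle a⟩
      have hne : (Set.range T).Nonempty := ⟨T 0, 0, rfl⟩
      set s := sSup (Set.range T) with hs
      obtain ⟨x, ⟨a0, rfl⟩, ha0⟩ :=
        exists_lt_of_lt_csSup hne (show s - ε' < s by linarith)
      set a1 : ℤ := min a0 (-1) with ha1def
      have ha1 : a1 ≤ -1 := min_le_right _ _
      have hTa1 : s - ε' < T a1 := by
        refine lt_of_lt_of_le ha0 ?_
        rw [hT]
        exact Finset.sum_le_sum_of_subset_of_nonneg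
          (Finset.Icc_subset_Icc (min_le_left _ _) le_rfl) fun m _ _ => hDnn m 0
      set i : ℤ := min (a1 - 1) i0 with hidef
      have hii0 : i ≤ i0 := min_le_right _ _
      have hia1 : i ≤ a1 - 1 := min_le_left _ _
      have hi1 : i ≤ -1 := by omega
      -- window bound
      have hwin : ∑ m ∈ Finset.Icc (i - (M : ℤ)) i, D m 0 ≤ ε' := by
        have hsub : ∑ m ∈ Finset.Icc (i - (M : ℤ)) i, D m 0
            ≤ ∑ m ∈ Finset.Icc (i - (M : ℤ)) (a1 - 1), D m 0 :=
          Finset.sum_le_sum_of_subset_of_nonneg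
            (Finset.Icc_subset_Icc le_rfl hia1) fun m _ _ => hDnn m 0
        have hMnn : (0 : ℤ) ≤ (M : ℤ) := Int.ofNat_nonneg M
        have hsplit : T (i - (M : ℤ))
            = (∑ m ∈ Finset.Icc (i - (M : ℤ)) (a1 - 1), D m 0) + T a1 := by
          rw [hT]; dsimp only
          have hun : Finset.Icc (i - (M : ℤ)) (-1)
              = Finset.Icc (i - (M : ℤ)) (a1 - 1) ∪ Finset.Icc a1 (-1) := by
            ext m; simp only [Finset.mem_Icc, Finset.mem_union]; omega
          have hdisj : Disjoint (Finset.Icc (i - (M : ℤ)) (a1 - 1)) (Finset.Icc a1 (-1)) := by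
            rw [Finset.disjoint_left]
            intro m hm hm'
            rw [Finset.mem_Icc] at hm hm'; omega
          rw [hun, Finset.sum_union hdisj]
        have hTiM : T (i - (M : ℤ)) ≤ s := le_csSup hbdd ⟨i - (M : ℤ), rfl⟩
        linarith
      -- combine
      have hiter := hSgiter i0 hi0 i hii0
      have hIccV : ∑ m ∈ Finset.Icc (i + 1) i0, D m 0 ≤ V := hTV' (i + 1) i0
      have hsmall : Sg i ≤ C * ε' := by
        have := hSgsmall i hi1
        calc Sg i ≤ lam * L * ((M : ℝ) + 1) * ∑ m ∈ Finset.Icc (i - (M : ℤ)) i, D m 0 := this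
          _ = C * ∑ m ∈ Finset.Icc (i - (M : ℤ)) i, D m 0 := by rw [hC]
          _ ≤ C * ε' := mul_le_mul_of_nonneg_left hwin hCpos.le
      have hCε : C * ε' = ε := by
        rw [hε'def]; field_simp
      linarith
    by_contra hcon
    push_neg at hcon
    have := hmain ((Sg i0 - V) / 2) (by linarith)
    linarith
  -- temporal variation equals Sg on the left
  have hTeqL : ∀ i : ℤ, i ≤ -1 →
      ∑ n ∈ Finset.range (M + 1), |u (i, n + 1) - u (i, n)| = Sg i := by
    intro i hi
    rw [hSg]
    refine Finset.sum_congr rfl fun n _ => ?_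
    rw [hleft i hi n,
      show u (i, n) - lam * (g (u (i, n)) - g (u (i - 1, n))) - u (i, n)
        = -(lam * (g (u (i, n)) - g (u (i - 1, n)))) by ring,
      abs_neg, abs_mul, abs_of_pos hlam]
  -- temporal variation equals Sf on the right
  have hTeqR : ∀ i : ℤ, 1 ≤ i →
      ∑ n ∈ Finset.range (M + 1), |u (i, n + 1) - u (i, n)| = Sf i := by
    intro i hi
    rw [hSf]
    refine Finset.sum_congr rfl fun n _ => ?_
    rw [hright i hi n,
      show u (i, n) - lam * (f (u (i, n)) - f (u (i - 1, n))) - u (i, n)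
        = -(lam * (f (u (i, n)) - f (u (i - 1, n)))) by ring,
      abs_neg, abs_mul, abs_of_pos hlam]
  -- temporal variation at the interface cell j = 0
  set T0 : ℝ := ∑ n ∈ Finset.range (M + 1), |u (0, n + 1) - u (0, n)| with hT0def
  have hT0 : T0 ≤ (L / alpha) * V := by
    have h1 : ∀ n : ℕ, |u (0, n + 1) - u (0, n)|
        ≤ (L / alpha) * |u (-1, n + 1) - u (-1, n)| := by
      intro n
      have hfa := (two_flux_abs_bounds halpha hf (u (0, n + 1)) (u (0, n))).1
      have hfb : |f (u (0, n + 1)) - f (u (0, n))|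
          = |g (u (-1, n + 1)) - g (u (-1, n))| := by rw [hRH, hRH]
      have hgb := (two_flux_abs_bounds halpha hg (u (-1, n + 1)) (u (-1, n))).2
      rw [hfb] at hfa
      rw [div_mul_eq_mul_div, le_div_iff₀ halpha]
      calc |u (0, n + 1) - u (0, n)| * alpha
          = alpha * |u (0, n + 1) - u (0, n)| := by ring
        _ ≤ |g (u (-1, n + 1)) - g (u (-1, n))| := hfa
        _ ≤ L * |u (-1, n + 1) - u (-1, n)| := hgb
    have h2 : T0 ≤ (L / alpha) * ∑ n ∈ Finset.range (M + 1), |u (-1, n + 1) - u (-1, n)| := by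
      rw [hT0def, Finset.mul_sum]
      exact Finset.sum_le_sum fun n _ => h1 n
    have h3 := hTeqL (-1) le_rfl
    have h4 := hSgV (-1) le_rfl
    have hd0 : 0 ≤ L / alpha := div_nonneg hL.le halpha.le
    calc T0 ≤ (L / alpha) * ∑ n ∈ Finset.range (M + 1), |u (-1, n + 1) - u (-1, n)| := h2
      _ = (L / alpha) * Sg (-1) := by rw [h3]
      _ ≤ (L / alpha) * V := mul_le_mul_of_nonneg_left h4 hd0
  -- the first right cell
  have hSf1 : Sf 1 ≤ D 1 0 + T0 := by
    have h1 : ∀ n : ℕ, lam * |f (u (1, n)) - f (u (0, n))|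
        ≤ (D 1 n - D 1 (n + 1)) + |u (0, n + 1) - u (0, n)| := by
      intro n
      have e1 := hright 1 le_rfl n
      rw [show (1 : ℤ) - 1 = 0 by norm_num] at e1
      have hrepr : u (1, n + 1) - u (0, n + 1)
          = (u (1, n) - u (0, n) - lam * (f (u (1, n)) - f (u (0, n))))
            - (u (0, n + 1) - u (0, n)) := by
        rw [e1]; ring
      have htri : D 1 (n + 1)
          ≤ |u (1, n) - u (0, n) - lam * (f (u (1, n)) - f (u (0, n)))|
            + |u (0, n + 1) - u (0, n)| := by
        rw [hD]; dsimp only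
        rw [show (1 : ℤ) - 1 = 0 by norm_num, hrepr]
        exact abs_sub _ _
      rw [two_flux_key_abs hlam halpha hCFL hf] at htri
      have hD1 : D 1 n = |u (1, n) - u (0, n)| := by
        rw [hD]; dsimp only; rw [show (1 : ℤ) - 1 = 0 by norm_num]
      rw [← hD1] at htri
      linarith
    have h2 : Sf 1 ≤ ∑ n ∈ Finset.range (M + 1),
        ((D 1 n - D 1 (n + 1)) + |u (0, n + 1) - u (0, n)|) := by
      rw [hSf]
      refine Finset.sum_le_sum fun n _ => ?_
      have := h1 n
      rw [show (1 : ℤ) - 1 = 0 by norm_num]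
      linarith
    rw [Finset.sum_add_distrib, Finset.sum_range_sub' (fun n => D 1 n) (M + 1), ← hT0def] at h2
    calc Sf 1 ≤ (D 1 0 - D 1 (M + 1)) + T0 := h2
      _ ≤ D 1 0 + T0 := by linarith [hDnn 1 (M + 1)]
  -- iterated recursion on the right
  have hSfiter : ∀ i : ℤ, 1 ≤ i →
      Sf i ≤ (∑ m ∈ Finset.Icc 2 i, D m 0) + Sf 1 := by
    refine Int.le_induction ?_ ?_
    · rw [Finset.Icc_eq_empty (by omega), Finset.sum_empty, zero_add]
    · intro i hi ih
      have hrec := hSfrec (i + 1) (by omega)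
      rw [show i + 1 - 1 = i by ring] at hrec
      have hins : Finset.Icc (2 : ℤ) (i + 1) = insert (i + 1) (Finset.Icc 2 i) := by
        ext x; simp only [Finset.mem_Icc, Finset.mem_insert]; omega
      have hnot : i + 1 ∉ Finset.Icc (2 : ℤ) i := by
        simp only [Finset.mem_Icc]; omega
      rw [hins, Finset.sum_insert hnot]
      calc Sf (i + 1) ≤ D (i + 1) 0 + Sf i := hrec
        _ ≤ D (i + 1) 0 + ((∑ m ∈ Finset.Icc 2 i, D m 0) + Sf 1) := by linarith
        _ = D (i + 1) 0 + (∑ m ∈ Finset.Icc 2 i, D m 0) + Sf 1 := by ring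
  -- final assembly
  have hgoal : ∑ n ∈ Finset.range (M + 1), |u (j, n + 1) - u (j, n)| ≤ V + (L / alpha) * V := by
    rcases lt_trichotomy j 0 with hj | hj | hj
    · have hj' : j ≤ -1 := by omega
      rw [hTeqL j hj']
      have := hSgV j hj'
      have hd0 : 0 ≤ (L / alpha) * V := mul_nonneg (div_nonneg hL.le halpha.le) hV
      linarith
    · subst hj
      rw [← hT0def]
      linarith [hT0, hV]
    · have hj' : (1 : ℤ) ≤ j := hj
      rw [hTeqR j hj']
      have h1 := hSfiter j hj'
      have h2 : (∑ m ∈ Finset.Icc (2 : ℤ) j, D m 0) + D 1 0 ≤ V := by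
        have hins : Finset.Icc (1 : ℤ) j = insert 1 (Finset.Icc 2 j) := by
          ext x; simp only [Finset.mem_Icc, Finset.mem_insert]; omega
        have hnot : (1 : ℤ) ∉ Finset.Icc (2 : ℤ) j := by
          simp only [Finset.mem_Icc]; omega
        have := hTV' 1 j
        rw [hins, Finset.sum_insert hnot] at this
        linarith
      linarith [hSf1]
  have hfin : V + (L / alpha) * V = (1 + L / alpha) * V := by ring
  linarith [hgoal]
end

section
/- Let λ > 0 and let f : ℝ → ℝ be monotone and CFL-compatible for λ. Suppose the real numbers v, w, and w' = w − λ(f(w) − f(v)) are one step of the upwind scheme. Then for every c ∈ ℝ the discrete Kružkov entropy inequality holds: |w' − c| ≤ |w − c| − λ(|f(w) − f(c)| − |f(v) − f(c)|). Equivalently, for a grid function u satisfying the upwind relation u_j^{n+1} = u_j^n − λ(f(u_j^n) − f(u_{j−1}^n)), one has |u_j^{n+1} − c| ≤ |u_j^n − c| − λ(|f(u_j^n) − f(c)| − |f(u_{j−1}^n) − f(c)|) for all c ∈ ℝ. -/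
/-- discrete Kružkov entropy inequality for one step of the
upwind scheme with a monotone, CFL-compatible flux. -/
theorem upwind_discrete_entropy_inequality
    (lam : ℝ) (hlam : 0 < lam) (f : ℝ → ℝ)
    (hf : ∀ a b : ℝ, a ≤ b → 0 ≤ f b - f a ∧ f b - f a ≤ (b - a) / lam)
    (v w w' : ℝ) (hstep : w' = w - lam * (f w - f v)) :
    ∀ c : ℝ, |w' - c| ≤ |w - c| - lam * (|f w - f c| - |f v - f c|) := by
  intro c
  set H : ℝ → ℝ → ℝ := fun a b => b - lam * (f b - f a) with hH
  have hmono : ∀ a b a' b' : ℝ, a ≤ a' → b ≤ b' → H a b ≤ H a' b' := by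
    intro a b a' b' ha hb
    have h1 := (hf a a' ha).1
    have h2 := (hf b b' hb).2
    have h3 : lam * (f b' - f b) ≤ b' - b := by
      have := (le_div_iff₀ hlam).mp h2
      linarith
    simp only [hH]
    nlinarith
  have hcc : H c c = c := by simp [hH]
  have habsf : ∀ x : ℝ, f (max x c) - f (min x c) = |f x - f c| := by
    intro x
    rcases le_total x c with h | h
    · rw [max_eq_right h, min_eq_left h, abs_of_nonpos (by linarith [(hf x c h).1])]
      ring
    · rw [max_eq_left h, min_eq_right h, abs_of_nonneg (by linarith [(hf c x h).1])]
  have h1 : w' ≤ H (max v c) (max w c) := by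
    rw [hstep]; exact hmono v w _ _ (le_max_left _ _) (le_max_left _ _)
  have h2 : c ≤ H (max v c) (max w c) := by
    have := hmono c c (max v c) (max w c) (le_max_right _ _) (le_max_right _ _)
    linarith [hcc]
  have h3 : H (min v c) (min w c) ≤ w' := by
    rw [hstep]; exact hmono _ _ v w (min_le_left _ _) (min_le_left _ _)
  have h4 : H (min v c) (min w c) ≤ c := by
    have := hmono (min v c) (min w c) c c (min_le_right _ _) (min_le_right _ _)
    linarith [hcc]
  have key : |w' - c| ≤ H (max v c) (max w c) - H (min v c) (min w c) := by
    rw [abs_sub_le_iff]; constructor <;> linarith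
  have habsw : max w c - min w c = |w - c| := by
    rcases le_total w c with h | h
    · rw [max_eq_right h, min_eq_left h, abs_of_nonpos (by linarith)]; ring
    · rw [max_eq_left h, min_eq_right h, abs_of_nonneg (by linarith)]
  have hw := habsf w
  have hv := habsf v
  calc |w' - c| ≤ H (max v c) (max w c) - H (min v c) (min w c) := key
    _ = (max w c - min w c) - lam * ((f (max w c) - f (min w c)) - (f (max v c) - f (min v c))) := by
        simp only [hH]; ring
    _ = |w - c| - lam * (|f w - f c| - |f v - f c|) := by rw [habsw, hw, hv]
end

section
/- Let λ > 0 and let f : ℝ → ℝ be monotone and CFL-compatible for λ. Let u : ℤ × ℕ → ℝ (written u_j^n) satisfy the upwind relation u_j^{n+1} = u_j^n − λ(f(u_j^n) − f(u_{j−1}^n)) for all j ∈ ℤ at a fixed time level n. Then the scheme is total variation diminishing: ∑_{j∈ℤ} |u_j^{n+1} − u_{j−1}^{n+1}| ≤ ∑_{j∈ℤ} |u_j^n − u_{j−1}^n|, where both sums are taken in [0,∞] (as unconditional sums of nonnegative terms). -/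
open scoped ENNReal

/-- the upwind scheme with a monotone, CFL-compatible flux is
total variation diminishing (TVD), with the discrete spatial total variations
taken as unconditional sums in `[0,∞]`. -/
theorem upwind_TVD
    (lam : ℝ) (hlam : 0 < lam) (f : ℝ → ℝ)
    (hf : ∀ a b : ℝ, a ≤ b → 0 ≤ f b - f a ∧ f b - f a ≤ (b - a) / lam)
    (u : ℤ × ℕ → ℝ) (n : ℕ)
    (hscheme : ∀ j : ℤ,
      u (j, n + 1) = u (j, n) - lam * (f (u (j, n)) - f (u (j - 1, n)))) :
    ∑' j : ℤ, ENNReal.ofReal |u (j, n + 1) - u (j - 1, n + 1)| ≤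
      ∑' j : ℤ, ENNReal.ofReal |u (j, n) - u (j - 1, n)| := by
  set v : ℤ → ℝ := fun j => u (j, n) with hv
  set e : ℤ → ℝ := fun j => lam * (f (v j) - f (v (j - 1))) with he
  set d : ℤ → ℝ := fun j => v j - v (j - 1) with hd
  have key : ∀ j, |d j - e j| + |e j| = |d j| := by
    intro j
    rcases le_total (v (j - 1)) (v j) with h | h
    · obtain ⟨h1, h2⟩ := hf _ _ h
      have he0 : 0 ≤ e j := mul_nonneg hlam.le h1
      have hed : e j ≤ d j := by
        have := mul_le_mul_of_nonneg_left h2 hlam.le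
        rw [mul_div_cancel₀ _ hlam.ne'] at this
        simpa [he, hd] using this
      rw [abs_of_nonneg (by linarith), abs_of_nonneg he0,
        abs_of_nonneg (by linarith : (0:ℝ) ≤ d j)]
      ring
    · obtain ⟨h1, h2⟩ := hf _ _ h
      have he0 : e j ≤ 0 := by
        have h3 : 0 ≤ lam * (f (v (j - 1)) - f (v j)) := mul_nonneg hlam.le h1
        simp only [he]; nlinarith
      have hde : d j ≤ e j := by
        have h4 := mul_le_mul_of_nonneg_left h2 hlam.le
        rw [mul_div_cancel₀ _ hlam.ne'] at h4
        simp only [he, hd]; nlinarith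
      rw [abs_of_nonpos (by linarith), abs_of_nonpos he0,
        abs_of_nonpos (by linarith : d j ≤ 0)]
      ring
  have hnew : ∀ j : ℤ, u (j, n + 1) - u (j - 1, n + 1) = (d j - e j) + e (j - 1) := by
    intro j
    rw [hscheme j, hscheme (j - 1)]
    simp only [hd, he, hv]
    ring
  calc ∑' j : ℤ, ENNReal.ofReal |u (j, n + 1) - u (j - 1, n + 1)|
      ≤ ∑' j : ℤ, (ENNReal.ofReal |d j - e j| + ENNReal.ofReal |e (j - 1)|) := by
        apply ENNReal.tsum_le_tsum
        intro j
        rw [hnew j, ← ENNReal.ofReal_add (abs_nonneg _) (abs_nonneg _)]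
        exact ENNReal.ofReal_le_ofReal (abs_add_le _ _)
    _ = (∑' j : ℤ, ENNReal.ofReal |d j - e j|) + ∑' j : ℤ, ENNReal.ofReal |e (j - 1)| :=
        ENNReal.tsum_add
    _ = (∑' j : ℤ, ENNReal.ofReal |d j - e j|) + ∑' j : ℤ, ENNReal.ofReal |e j| := by
        congr 1
        exact (Equiv.subRight (1 : ℤ)).tsum_eq (fun j => ENNReal.ofReal |e j|)
    _ = ∑' j : ℤ, (ENNReal.ofReal |d j - e j| + ENNReal.ofReal |e j|) := ENNReal.tsum_add.symm
    _ = ∑' j : ℤ, ENNReal.ofReal |d j| := by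
        refine tsum_congr fun j => ?_
        rw [← ENNReal.ofReal_add (abs_nonneg _) (abs_nonneg _), key j]
    _ = ∑' j : ℤ, ENNReal.ofReal |u (j, n) - u (j - 1, n)| := rfl
end

section
/- Let λ > 0, L > 0, and let f : ℝ → ℝ be monotone and CFL-compatible for λ and Lipschitz with constant L, i.e. 0 ≤ f(b) − f(a) ≤ min(L(b−a), (b−a)/λ) for all a ≤ b. Let u : ℤ × ℕ → ℝ (written u_j^n) satisfy the upwind relation u_j^{n+1} = u_j^n − λ(f(u_j^n) − f(u_{j−1}^n)) for all j ∈ ℤ and all n ≥ 0, and suppose the discrete total variation of the initial data satisfies ∑_{j∈ℤ} |u_j^0 − u_{j−1}^0| ≤ V < ∞. Then the scheme is Lipschitz continuous in time in the discrete L¹ sense: for all natural numbers n ≤ m, ∑_{j∈ℤ} |u_j^m − u_j^n| ≤ (m − n)·λ·L·V, the sum being taken in [0,∞]. -/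
/-!
Monotonicity and the CFL condition make the upwind scheme total variation diminishing (Harten):
the new jump `u_j^{n+1} - u_{j-1}^{n+1}` is the old jump `Δu_j` minus its flux jump
`λ Δf_j`, plus the neighbouring flux jump `λ Δf_{j-1}`. Since `Δf_j` has the sign of `Δu_j`
and `λ |Δf_j| ≤ |Δu_j|`, the difference `Δu_j - λ Δf_j` has absolute value
`|Δu_j| - λ |Δf_j|`, so after summing over `j` the flux jumps cancel.
Hence every level has variation at most `V`, one time step moves the solution by
`∑_j λ |Δf_j| ≤ λ L V` in `ℓ¹`, and the triangle inequality sums these steps.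
-/

open scoped ENNReal

theorem ENNReal.tsum_le_tsum_add_of_le_add_pred {a b c : ℤ → ℝ≥0∞}
    (h : ∀ j, a j ≤ b j + c (j - 1)) : ∑' j, a j ≤ ∑' j, (b j + c j) := by
  calc ∑' j, a j ≤ ∑' j, (b j + c (j - 1)) := ENNReal.tsum_le_tsum h
    _ = ∑' j, b j + ∑' j, c (j - 1) := ENNReal.tsum_add
    _ = ∑' j, b j + ∑' j, c j := congrArg _ ((Equiv.subRight (1 : ℤ)).tsum_eq c)
    _ = ∑' j, (b j + c j) := ENNReal.tsum_add.symm

theorem abs_sub_le_of_nonneg_sub_le {f B : ℝ → ℝ}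
    (hf : ∀ a b, a ≤ b → 0 ≤ f b - f a ∧ f b - f a ≤ B (b - a)) (x y : ℝ) :
    |f y - f x| ≤ B |y - x| := by
  rcases le_total x y with hxy | hyx
  · obtain ⟨hnonneg, hle⟩ := hf x y hxy
    rwa [abs_of_nonneg hnonneg, abs_of_nonneg (sub_nonneg.mpr hxy)]
  · obtain ⟨hnonneg, hle⟩ := hf y x hyx
    rwa [abs_sub_comm, abs_of_nonneg hnonneg, abs_sub_comm, abs_of_nonneg (sub_nonneg.mpr hyx)]

namespace Upwind

noncomputable section

def totalVariation (v : ℤ → ℝ) : ℝ≥0∞ := ∑' j, ENNReal.ofReal |v j - v (j - 1)|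

def l1EDist (v w : ℤ → ℝ) : ℝ≥0∞ := ∑' j, ENNReal.ofReal |v j - w j|

def step (lam : ℝ) (f : ℝ → ℝ) (v : ℤ → ℝ) (j : ℤ) : ℝ :=
  v j - lam * (f (v j) - f (v (j - 1)))

end

theorem l1EDist_triangle (u v w : ℤ → ℝ) : l1EDist u w ≤ l1EDist u v + l1EDist v w := by
  unfold l1EDist
  rw [← ENNReal.tsum_add]
  refine ENNReal.tsum_le_tsum fun j => ?_
  exact (ENNReal.ofReal_le_ofReal (abs_sub_le _ _ _)).trans ENNReal.ofReal_add_le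

theorem l1EDist_add_le_mul {w : ℕ → ℤ → ℝ} {C : ℝ≥0∞}
    (h : ∀ n, l1EDist (w (n + 1)) (w n) ≤ C) (n k : ℕ) :
    l1EDist (w (n + k)) (w n) ≤ k * C := by
  induction k with
  | zero => simp [l1EDist]
  | succ k ih =>
    calc l1EDist (w (n + k + 1)) (w n)
        ≤ l1EDist (w (n + k + 1)) (w (n + k)) + l1EDist (w (n + k)) (w n) :=
          l1EDist_triangle _ _ _
      _ ≤ C + k * C := add_le_add (h _) ih
      _ = (k + 1 : ℕ) * C := by push_cast; ring

section Scheme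

variable {lam : ℝ} {f : ℝ → ℝ}

theorem abs_sub_sub_mul_sub_eq (hf : Monotone f) (hlam : 0 < lam)
    (hcfl : ∀ x y, |f y - f x| ≤ |y - x| / lam) (x y : ℝ) :
    |y - x - lam * (f y - f x)| = |y - x| - lam * |f y - f x| := by
  have hle : lam * |f y - f x| ≤ |y - x| := (le_div_iff₀' hlam).mp (hcfl x y)
  rcases le_total x y with hxy | hyx
  · have hfxy : 0 ≤ f y - f x := sub_nonneg.mpr (hf hxy)
    rw [abs_of_nonneg hfxy, abs_of_nonneg (sub_nonneg.mpr hxy)] at hle ⊢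
    rw [abs_of_nonneg (by linarith)]
  · have hfyx : f y - f x ≤ 0 := sub_nonpos.mpr (hf hyx)
    rw [abs_of_nonpos hfyx, abs_of_nonpos (sub_nonpos.mpr hyx)] at hle ⊢
    rw [abs_of_nonpos (by linarith)]
    ring

theorem totalVariation_step_le (hf : Monotone f) (hlam : 0 < lam)
    (hcfl : ∀ x y, |f y - f x| ≤ |y - x| / lam) (v : ℤ → ℝ) :
    totalVariation (step lam f v) ≤ totalVariation v := by
  set g : ℤ → ℝ := fun j => lam * |f (v j) - f (v (j - 1))|
  have hjump : ∀ j,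
      |v j - v (j - 1) - lam * (f (v j) - f (v (j - 1)))| = |v j - v (j - 1)| - g j :=
    fun j => abs_sub_sub_mul_sub_eq hf hlam hcfl _ _
  have hsplit : ∀ j, step lam f v j - step lam f v (j - 1) =
      (v j - v (j - 1) - lam * (f (v j) - f (v (j - 1)))) +
        lam * (f (v (j - 1)) - f (v (j - 1 - 1))) := by
    intro j; simp only [step]; ring
  have hpointwise : ∀ j, ENNReal.ofReal |step lam f v j - step lam f v (j - 1)| ≤
      ENNReal.ofReal (|v j - v (j - 1)| - g j) + ENNReal.ofReal (g (j - 1)) := by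
    intro j
    refine le_trans ?_ ENNReal.ofReal_add_le
    refine ENNReal.ofReal_le_ofReal ?_
    rw [hsplit, ← hjump]
    refine (abs_add_le _ _).trans_eq ?_
    rw [abs_mul, abs_of_pos hlam]
  calc totalVariation (step lam f v)
      ≤ ∑' j, (ENNReal.ofReal (|v j - v (j - 1)| - g j) + ENNReal.ofReal (g j)) :=
        ENNReal.tsum_le_tsum_add_of_le_add_pred hpointwise
    _ = totalVariation v := by
        refine tsum_congr fun j => ?_
        rw [← ENNReal.ofReal_add ((hjump j).symm ▸ abs_nonneg _) (by positivity),
          sub_add_cancel]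

theorem l1EDist_step_le {L : ℝ} (hlam : 0 < lam)
    (hLip : ∀ x y, |f y - f x| ≤ L * |y - x|) (v : ℤ → ℝ) :
    l1EDist (step lam f v) v ≤ ENNReal.ofReal (lam * L) * totalVariation v := by
  rw [totalVariation, ← ENNReal.tsum_mul_left]
  refine ENNReal.tsum_le_tsum fun j => ?_
  rw [← ENNReal.ofReal_mul' (abs_nonneg _)]
  refine ENNReal.ofReal_le_ofReal ?_
  calc |step lam f v j - v j| = lam * |f (v j) - f (v (j - 1))| := by
        rw [step, sub_sub_cancel_left, abs_neg, abs_mul, abs_of_pos hlam]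
    _ ≤ lam * (L * |v j - v (j - 1)|) := by gcongr; exact hLip _ _
    _ = lam * L * |v j - v (j - 1)| := by ring

end Scheme

end Upwind

open Upwind in
/-- discrete L¹ Lipschitz continuity in time of the upwind
scheme: between time levels `n ≤ m` the discrete L¹ distance is bounded by
`(m - n) · λ · L · V`, where `V` bounds the discrete total variation of the
initial data. -/
theorem upwind_lipschitz_in_time
    (lam L : ℝ) (hlam : 0 < lam) (hL : 0 < L) (f : ℝ → ℝ)
    (hf : ∀ a b : ℝ, a ≤ b →
      0 ≤ f b - f a ∧ f b - f a ≤ min (L * (b - a)) ((b - a) / lam))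
    (u : ℤ × ℕ → ℝ)
    (hscheme : ∀ (j : ℤ) (n : ℕ),
      u (j, n + 1) = u (j, n) - lam * (f (u (j, n)) - f (u (j - 1, n))))
    (V : ℝ)
    (hTV : ∑' j : ℤ, ENNReal.ofReal |u (j, 0) - u (j - 1, 0)| ≤ ENNReal.ofReal V) :
    ∀ n m : ℕ, n ≤ m →
      ∑' j : ℤ, ENNReal.ofReal |u (j, m) - u (j, n)| ≤
        ENNReal.ofReal (((m - n : ℕ) : ℝ) * lam * L * V) := by
  set w : ℕ → ℤ → ℝ := fun n j => u (j, n)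
  have hstep : ∀ n, w (n + 1) = step lam f (w n) := fun n => funext fun j => hscheme j n
  have hmono : Monotone f := fun a b hab => sub_nonneg.mp (hf a b hab).1
  have hbound := abs_sub_le_of_nonneg_sub_le (B := fun t => min (L * t) (t / lam)) hf
  have hTVle : ∀ n, totalVariation (w n) ≤ ENNReal.ofReal V := fun n =>
    (antitone_nat_of_succ_le (f := fun n => totalVariation (w n)) (fun n => hstep n ▸
      totalVariation_step_le hmono hlam (fun x y => (hbound x y).trans (min_le_right _ _)) _)
      n.zero_le).trans hTV
  have hone : ∀ n, l1EDist (w (n + 1)) (w n) ≤ ENNReal.ofReal (lam * L) * ENNReal.ofReal V :=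
    fun n => hstep n ▸ (l1EDist_step_le hlam (fun x y => (hbound x y).trans (min_le_left _ _)) _
      |>.trans (mul_le_mul_right (hTVle n) _))
  intro n m hnm
  obtain ⟨k, rfl⟩ := Nat.exists_eq_add_of_le hnm
  calc l1EDist (w (n + k)) (w n)
      ≤ k * (ENNReal.ofReal (lam * L) * ENNReal.ofReal V) := l1EDist_add_le_mul hone n k
    _ = ENNReal.ofReal (((n + k - n : ℕ) : ℝ) * lam * L * V) := by
      rw [Nat.add_sub_cancel_left, ← ENNReal.ofReal_mul (by positivity),
        ← ENNReal.ofReal_natCast, ← ENNReal.ofReal_mul k.cast_nonneg,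
        mul_assoc, mul_assoc, mul_assoc]
end

section
/- Let λ > 0 and f : ℝ → ℝ, let i < j be integers and M ∈ ℕ, and let u : ℤ × ℕ → ℝ (written u_l^n) satisfy the upwind relation u_l^{n+1} = u_l^n − λ(f(u_l^n) − f(u_{l−1}^n)) for all columns l with i + 1 ≤ l ≤ j and all 0 ≤ n ≤ M. Suppose K ≥ 0 is such that the temporal variation of each of these columns is bounded: ∑_{n=0}^{M} |u_l^{n+1} − u_l^n| ≤ K for every l with i + 1 ≤ l ≤ j. Then the flux of the numerical solution is discretely Lipschitz in space in the ℓ¹-in-time sense: ∑_{n=0}^{M} |f(u_j^n) − f(u_i^n)| ≤ (j − i)·K/λ. -/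
/-!
Each scheme step turns the spatial flux jump `f(u_l^n) - f(u_{l-1}^n)` into the temporal
increment `(u_l^n - u_l^{n+1}) / λ`, so the ℓ¹-in-time norm of the jump across one cell is the
temporal variation of that column divided by `λ`, hence at most `K / λ`. The triangle inequality
across the `j - i` cells between `i` and `j` adds these bounds up.
-/

open Finset

theorem abs_sub_eq_abs_sub_div_of_eq_sub_mul {lam a b x y : ℝ} (hlam : 0 < lam)
    (h : y = x - lam * (a - b)) : |a - b| = |y - x| / lam := by
  rw [h, sub_sub_cancel_left, abs_neg, abs_mul, abs_of_pos hlam, mul_div_cancel_left₀ _ hlam.ne']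

theorem sum_abs_flux_sub_eq_of_upwind {lam : ℝ} (hlam : 0 < lam) (f : ℝ → ℝ) {v w : ℕ → ℝ}
    (M : ℕ) (hscheme : ∀ n ≤ M, v (n + 1) = v n - lam * (f (v n) - f (w n))) :
    ∑ n ∈ range (M + 1), |f (v n) - f (w n)| =
      (∑ n ∈ range (M + 1), |v (n + 1) - v n|) / lam := by
  rw [sum_div]
  refine sum_congr rfl fun n hn => abs_sub_eq_abs_sub_div_of_eq_sub_mul hlam (hscheme n ?_)
  exact Nat.lt_succ_iff.mp (mem_range.mp hn)

theorem sum_norm_sub_le_of_sum_norm_succ_sub_le {ι E : Type*} [SeminormedAddCommGroup E]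
    (s : Finset ι) (F : ℕ → ι → E) {N : ℕ} {C : ℝ}
    (hstep : ∀ k < N, ∑ n ∈ s, ‖F (k + 1) n - F k n‖ ≤ C) :
    ∑ n ∈ s, ‖F N n - F 0 n‖ ≤ N * C := by
  induction N with
  | zero => simp
  | succ N ih =>
    have htri : ∑ n ∈ s, ‖F (N + 1) n - F 0 n‖ ≤
        ∑ n ∈ s, ‖F (N + 1) n - F N n‖ + ∑ n ∈ s, ‖F N n - F 0 n‖ := by
      rw [← sum_add_distrib]
      exact sum_le_sum fun n _ => norm_sub_le_norm_sub_add_norm_sub _ _ _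
    have hlast := hstep N N.lt_succ_self
    have hprev := ih fun k hk => hstep k (hk.trans N.lt_succ_self)
    push_cast
    linarith

theorem upwind_flux_lipschitz_in_space_general
    (lam : ℝ) (hlam : 0 < lam) (f : ℝ → ℝ)
    (i j : ℤ) (hij : i < j) (M : ℕ) (u : ℤ × ℕ → ℝ)
    (hscheme : ∀ l : ℤ, i + 1 ≤ l → l ≤ j → ∀ n : ℕ, n ≤ M →
      u (l, n + 1) = u (l, n) - lam * (f (u (l, n)) - f (u (l - 1, n))))
    (K : ℝ)
    (hTV : ∀ l : ℤ, i + 1 ≤ l → l ≤ j →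
      ∑ n ∈ Finset.range (M + 1), |u (l, n + 1) - u (l, n)| ≤ K) :
    ∑ n ∈ Finset.range (M + 1), |f (u (j, n)) - f (u (i, n))| ≤
      ((j - i : ℤ) : ℝ) * K / lam := by
  obtain ⟨N, rfl⟩ := Int.le.dest hij.le
  have hcell : ∀ k < N, ∑ n ∈ range (M + 1),
      ‖f (u (i + (k + 1 : ℕ), n)) - f (u (i + k, n))‖ ≤ K / lam := by
    intro k hk
    have hl : i + 1 ≤ i + (k + 1 : ℕ) := by omega
    have hlj : i + (k + 1 : ℕ) ≤ i + N := by omega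
    have hprev : i + (k + 1 : ℕ) - 1 = i + k := by push_cast; ring
    simp only [Real.norm_eq_abs]
    rw [sum_abs_flux_sub_eq_of_upwind hlam f M fun n hn => hprev ▸ hscheme _ hl hlj n hn]
    exact div_le_div_of_nonneg_right (hTV _ hl hlj) hlam.le
  have hsum := sum_norm_sub_le_of_sum_norm_succ_sub_le (range (M + 1))
    (fun k n => f (u (i + k, n))) hcell
  simp only [Real.norm_eq_abs, Nat.cast_zero, add_zero] at hsum
  calc _ ≤ N * (K / lam) := hsum
    _ = _ := by rw [add_sub_cancel_left, Int.cast_natCast, mul_div_assoc]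

/-- discrete spatial Lipschitz continuity (in the ℓ¹-in-time
sense) of the flux of the numerical solution of the upwind scheme, given
per-column temporal variation bounds. -/
theorem upwind_flux_lipschitz_in_space
    (lam : ℝ) (hlam : 0 < lam) (f : ℝ → ℝ)
    (i j : ℤ) (hij : i < j) (M : ℕ) (u : ℤ × ℕ → ℝ)
    (hscheme : ∀ l : ℤ, i + 1 ≤ l → l ≤ j → ∀ n : ℕ, n ≤ M →
      u (l, n + 1) = u (l, n) - lam * (f (u (l, n)) - f (u (l - 1, n))))
    (K : ℝ) (hK : 0 ≤ K)
    (hTV : ∀ l : ℤ, i + 1 ≤ l → l ≤ j →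
      ∑ n ∈ Finset.range (M + 1), |u (l, n + 1) - u (l, n)| ≤ K) :
    ∑ n ∈ Finset.range (M + 1), |f (u (j, n)) - f (u (i, n))| ≤
      ((j - i : ℤ) : ℝ) * K / lam :=
  upwind_flux_lipschitz_in_space_general lam hlam f i j hij M u hscheme K hTV
end

section
/- Let λ > 0, g : ℝ → ℝ, N ≥ 1 and M ∈ ℕ, and let u : ℤ × ℕ → ℝ (written u_j^n) satisfy the upwind relation u_j^{n+1} = u_j^n − λ(g(u_j^n) − g(u_{j−1}^n)) for all columns j with −N + 1 ≤ j ≤ −1 and all 0 ≤ n ≤ M. Suppose K ≥ 0 is such that ∑_{n=0}^{M} |u_j^{n+1} − u_j^n| ≤ K for every column j with −N + 1 ≤ j ≤ −1. Then ∑_{n=0}^{M} ∑_{j=−N}^{−1} |g(u_j^n) − g(u_{−1}^n)| ≤ K·N·(N+1)/(2λ). -/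
lemma upwind_tele_nat (f : ℤ → ℝ) (a : ℤ) :
    ∀ k : ℕ, |f (a + k) - f a| ≤ ∑ i ∈ Finset.Icc (a + 1) (a + k), |f i - f (i - 1)| := by
  intro k
  induction k with
  | zero => simp
  | succ k ih =>
      have hcast : a + ((k : ℤ) + 1) = (a + k) + 1 := by ring
      push_cast
      have hset : Finset.Icc (a + 1) (a + (k : ℤ) + 1) =
          insert (a + (k : ℤ) + 1) (Finset.Icc (a + 1) (a + (k : ℤ))) := by
        ext i; simp only [Finset.mem_Icc, Finset.mem_insert]; omega
      rw [hcast, hset, Finset.sum_insert (by simp [Finset.mem_Icc])]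
      have h1 : |f (a + k + 1) - f a| ≤ |f (a + k + 1) - f (a + k)| + |f (a + k) - f a| := by
        have := abs_sub_le (f (a + k + 1)) (f (a + k)) (f a); linarith
      have h2 : f (a + k + 1) - f (a + k + 1 - 1) = f (a + k + 1) - f (a + k) := by norm_num
      rw [h2]
      push_cast at ih
      linarith

lemma upwind_tele (f : ℤ → ℝ) (a : ℤ) :
    ∀ b : ℤ, a ≤ b → |f b - f a| ≤ ∑ i ∈ Finset.Icc (a + 1) b, |f i - f (i - 1)| := by
  intro b hb
  have hb' : b = a + ((b - a).toNat : ℤ) := by omega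
  rw [hb']
  exact upwind_tele_nat f a (b - a).toNat

lemma upwind_card_sum : ∀ n : ℕ,
    ∑ j ∈ Finset.Icc (-(n : ℤ)) (-1), (((-j - 1).toNat : ℝ)) ≤ n * (n + 1) / 2 := by
  intro n
  induction n with
  | zero => simp
  | succ n ih =>
      have hset : Finset.Icc (-((n : ℤ) + 1)) (-1) =
          insert (-((n : ℤ) + 1)) (Finset.Icc (-(n : ℤ)) (-1)) := by
        ext i; simp only [Finset.mem_Icc, Finset.mem_insert]; omega
      push_cast
      rw [hset, Finset.sum_insert (by simp [Finset.mem_Icc])]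
      have h1 : (((-(-((n : ℤ) + 1)) - 1).toNat : ℝ)) = n := by
        norm_num
      rw [h1]
      push_cast at ih
      nlinarith

/-- discrete boundary-layer estimate near the interface: the
accumulated flux deviation from the boundary column `-1` over the columns
`-N, …, -1` is bounded by `K·N·(N+1)/(2λ)`. -/
theorem upwind_boundary_layer_estimate
    (lam : ℝ) (hlam : 0 < lam) (g : ℝ → ℝ)
    (N : ℕ) (hN : 1 ≤ N) (M : ℕ) (u : ℤ × ℕ → ℝ)
    (hscheme : ∀ j : ℤ, -(N : ℤ) + 1 ≤ j → j ≤ -1 → ∀ n : ℕ, n ≤ M →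
      u (j, n + 1) = u (j, n) - lam * (g (u (j, n)) - g (u (j - 1, n))))
    (K : ℝ) (hK : 0 ≤ K)
    (hTV : ∀ j : ℤ, -(N : ℤ) + 1 ≤ j → j ≤ -1 →
      ∑ n ∈ Finset.range (M + 1), |u (j, n + 1) - u (j, n)| ≤ K) :
    ∑ n ∈ Finset.range (M + 1), ∑ j ∈ Finset.Icc (-(N : ℤ)) (-1),
        |g (u (j, n)) - g (u (-1, n))| ≤
      K * N * (N + 1) / (2 * lam) := by
  have key : ∀ i : ℤ, -(N : ℤ) + 1 ≤ i → i ≤ -1 →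
      ∑ n ∈ Finset.range (M + 1), |g (u (i, n)) - g (u (i - 1, n))| ≤ K / lam := by
    intro i h1 h2
    have heq : ∀ n ∈ Finset.range (M + 1),
        |g (u (i, n)) - g (u (i - 1, n))| = |u (i, n + 1) - u (i, n)| / lam := by
      intro n hn
      have hs := hscheme i h1 h2 n (Nat.lt_succ_iff.mp (Finset.mem_range.mp hn))
      have hd : u (i, n + 1) - u (i, n) = -(lam * (g (u (i, n)) - g (u (i - 1, n)))) := by
        rw [hs]; ring
      rw [hd, abs_neg, abs_mul, abs_of_pos hlam, mul_comm, mul_div_assoc,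
        div_self (ne_of_gt hlam), mul_one]
    rw [Finset.sum_congr rfl heq, ← Finset.sum_div]
    exact div_le_div_of_nonneg_right (hTV i h1 h2) hlam.le
  calc ∑ n ∈ Finset.range (M + 1), ∑ j ∈ Finset.Icc (-(N : ℤ)) (-1),
        |g (u (j, n)) - g (u (-1, n))|
      ≤ ∑ n ∈ Finset.range (M + 1), ∑ j ∈ Finset.Icc (-(N : ℤ)) (-1),
          ∑ i ∈ Finset.Icc (j + 1) (-1), |g (u (i, n)) - g (u (i - 1, n))| := by
        apply Finset.sum_le_sum; intro n _
        apply Finset.sum_le_sum; intro j hj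
        rw [Finset.mem_Icc] at hj
        rw [abs_sub_comm]
        exact upwind_tele (fun i => g (u (i, n))) j (-1) hj.2
    _ = ∑ j ∈ Finset.Icc (-(N : ℤ)) (-1), ∑ i ∈ Finset.Icc (j + 1) (-1),
          ∑ n ∈ Finset.range (M + 1), |g (u (i, n)) - g (u (i - 1, n))| := by
        rw [Finset.sum_comm]
        exact Finset.sum_congr rfl fun j _ => Finset.sum_comm
    _ ≤ ∑ j ∈ Finset.Icc (-(N : ℤ)) (-1), ∑ i ∈ Finset.Icc (j + 1) (-1), (K / lam) := by
        apply Finset.sum_le_sum; intro j hj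
        rw [Finset.mem_Icc] at hj
        apply Finset.sum_le_sum; intro i hi
        rw [Finset.mem_Icc] at hi
        exact key i (by omega) hi.2
    _ = ∑ j ∈ Finset.Icc (-(N : ℤ)) (-1), (((-j - 1).toNat : ℝ)) * (K / lam) := by
        apply Finset.sum_congr rfl; intro j hj
        rw [Finset.sum_const, Int.card_Icc, nsmul_eq_mul]
        congr 2
        omega
    _ = (∑ j ∈ Finset.Icc (-(N : ℤ)) (-1), (((-j - 1).toNat : ℝ))) * (K / lam) := by
        rw [Finset.sum_mul]
    _ ≤ (N * (N + 1) / 2) * (K / lam) := by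
        apply mul_le_mul_of_nonneg_right (upwind_card_sum N)
        positivity
    _ = K * N * (N + 1) / (2 * lam) := by field_simp
end

section
/- Let T > 0, ε > 0 and ε₀ > 0. Let ω_ε, ω_{ε₀} : ℝ → [0,∞) be measurable, even, supported in [−ε, ε] and [−ε₀, ε₀] respectively, each with total integral 1. Let u, v : (−∞,0] × [0,T] → ℝ be measurable with u(·,t), v(·,t) integrable on (−∞,0] for each t ∈ [0,T]. Define the moduli of continuity μ(w, ε) = sup_{|z|≤ε} ∫_{{x≤0 : x+z≤0}} |w(x+z) − w(x)| dx for w : (−∞,0] → ℝ, and ν₀(w, ε₀) = sup_{0≤s≤min(ε₀,T)} ∫_{−∞}^{0} |w(x,s) − w(x,0)| dx for w : (−∞,0] × [0,T] → ℝ. Then ∫_0^T ∫_{−∞}^0 ∫_{−∞}^0 (|u(x,0) − v(y,s)| + |v(x,0) − u(y,s)|)·ω_ε(x−y)·ω_{ε₀}(s) dx dy ds ≤ ‖u(·,0) − v(·,0)‖_{L¹((−∞,0])} + (1/2)·(ν₀(u, ε₀) + μ(u(·,0), ε) + ν₀(v, ε₀) + μ(v(·,0), ε)), where the inequality is understood in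 [0,∞]. -/
/-!
Inserting `v(x,0)` and `v(y,0)` (respectively `u(x,0)` and `u(y,0)`) into the two absolute
values bounds the integrand by `2|u(x,0) - v(x,0)|`, the spatial differences
`|w(x,0) - w(y,0)|` and the temporal differences `|w(y,0) - w(y,s)|`, all weighted by
`ω_ε(x - y) ω_{ε₀}(s)`. Since `ω_ε` has mass one, the first kind of term contributes the
`L¹` distance, the spatial ones become `μ` after substituting `x = y + z` and exchanging the
`y`- and `z`-integrals, and the temporal ones are controlled by `ν₀` because `ω_{ε₀}(s) = 0`
for `s > ε₀`. Finally, `ω_{ε₀}` is even, so its mass on `[0, T]` is at most `1/2`.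
-/

open MeasureTheory Set
open scoped ENNReal

theorem two_mul_setLIntegral_Ici_of_even {f : ℝ → ℝ≥0∞} (hf : ∀ x, f (-x) = f x) :
    2 * ∫⁻ x in Ici 0, f x = ∫⁻ x, f x := by
  have hneg : ∫⁻ x in Iio 0, f x = ∫⁻ x in Ici 0, f x := by
    rw [← lintegral_indicator measurableSet_Iio, ← lintegral_neg_eq_self,
      Measure.restrict_congr_set Ioi_ae_eq_Ici.symm, ← lintegral_indicator measurableSet_Ioi]
    refine lintegral_congr fun x => ?_
    by_cases hx : 0 < x <;> simp [indicator, hx, hf]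
  rw [← lintegral_add_compl (μ := volume) f (measurableSet_Ici (a := 0)), compl_Ici, hneg, two_mul]

theorem lintegral_ofReal_eq_one_of_integral_eq_one {α : Type*} [MeasurableSpace α]
    {μ : Measure α} {f : α → ℝ} (hf : ∀ x, 0 ≤ f x) (h : ∫ x, f x ∂μ = 1) :
    ∫⁻ x, ENNReal.ofReal (f x) ∂μ = 1 := by
  rw [← ofReal_integral_eq_lintegral_ofReal (.of_integral_ne_zero (by simp [h]))
    (.of_forall hf), h, ENNReal.ofReal_one]

theorem setLIntegral_ofReal_le_inv_two_of_even {ω : ℝ → ℝ} (hω_nonneg : ∀ x, 0 ≤ ω x)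
    (hω_even : ∀ x, ω (-x) = ω x) (hω_int : ∫ x, ω x = 1) {s : Set ℝ} (hs : s ⊆ Ici 0) :
    ∫⁻ x in s, ENNReal.ofReal (ω x) ≤ 2⁻¹ := by
  have h := two_mul_setLIntegral_Ici_of_even (f := fun x => ENNReal.ofReal (ω x))
    (by simp [hω_even])
  rw [lintegral_ofReal_eq_one_of_integral_eq_one hω_nonneg hω_int, mul_comm] at h
  exact (lintegral_mono_set hs).trans (ENNReal.eq_inv_of_mul_eq_one_left h).le

theorem lintegral_ofReal_abs_le_of_integral_le {α : Type*} [MeasurableSpace α]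
    {μ : Measure α} {f : α → ℝ} {C : ℝ} (hf : Integrable f μ) (hC : ∫ x, |f x| ∂μ ≤ C) :
    ∫⁻ x, ENNReal.ofReal |f x| ∂μ ≤ ENNReal.ofReal C := by
  rw [← ofReal_integral_eq_lintegral_ofReal hf.abs (.of_forall fun _ => abs_nonneg _)]
  exact ENNReal.ofReal_le_ofReal hC

theorem ENNReal.ofReal_abs_sub_mul_le_add (a b c d k : ℝ) :
    ENNReal.ofReal (|a - d| * k) ≤ ENNReal.ofReal |a - b| * ENNReal.ofReal k +
      (ENNReal.ofReal |b - c| * ENNReal.ofReal k + ENNReal.ofReal |c - d| * ENNReal.ofReal k) := by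
  rw [ENNReal.ofReal_mul (abs_nonneg _), ← add_mul, ← add_mul]
  gcongr
  calc ENNReal.ofReal |a - d| ≤ ENNReal.ofReal (|a - b| + (|b - c| + |c - d|)) := by
        gcongr
        exact (abs_sub_le a b d).trans (by gcongr; exact abs_sub_le b c d)
    _ ≤ _ := ENNReal.ofReal_add_le.trans (by gcongr; exact ENNReal.ofReal_add_le)

theorem lintegral_lintegral_add_left {α β : Type*} [MeasurableSpace α] [MeasurableSpace β]
    {μ : Measure α} {ν : Measure β} [SFinite ν] {f g : α → β → ℝ≥0∞}
    (hf : Measurable (Function.uncurry f)) :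
    ∫⁻ x, ∫⁻ y, (f x y + g x y) ∂ν ∂μ = ∫⁻ x, ∫⁻ y, f x y ∂ν ∂μ + ∫⁻ x, ∫⁻ y, g x y ∂ν ∂μ := by
  rw [← lintegral_add_left (f := fun x => ∫⁻ y, f x y ∂ν) hf.lintegral_prod_right']
  exact lintegral_congr fun x => lintegral_add_left (hf.comp measurable_prodMk_left) _

theorem lintegral_lintegral_ofReal_add_mul_mul {α β : Type*} [MeasurableSpace α]
    [MeasurableSpace β] {μ : Measure α} {ν : Measure β} [SFinite ν] {a b k : α → β → ℝ}
    (ha : ∀ x y, 0 ≤ a x y) (hb : ∀ x y, 0 ≤ b x y) (hk : ∀ x y, 0 ≤ k x y)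
    (hak : Measurable (Function.uncurry fun x y => ENNReal.ofReal (a x y * k x y))) (c : ℝ) :
    ∫⁻ x, ∫⁻ y, ENNReal.ofReal ((a x y + b x y) * k x y * c) ∂ν ∂μ =
      (∫⁻ x, ∫⁻ y, ENNReal.ofReal (a x y * k x y) ∂ν ∂μ +
        ∫⁻ x, ∫⁻ y, ENNReal.ofReal (b x y * k x y) ∂ν ∂μ) * ENNReal.ofReal c := by
  rw [← lintegral_lintegral_add_left hak, ← lintegral_mul_const' _ _ ENNReal.ofReal_ne_top]
  refine lintegral_congr fun x => ?_
  rw [← lintegral_mul_const' _ _ ENNReal.ofReal_ne_top]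
  refine lintegral_congr fun y => ?_
  have := ha x y; have := hb x y; have := hk x y
  rw [ENNReal.ofReal_mul (by positivity), add_mul,
    ENNReal.ofReal_add (by positivity) (by positivity)]

theorem MeasureTheory.IntegrableOn.comp_add_right {G E : Type*} [AddGroup G]
    [MeasurableSpace G] [MeasurableAdd G] {μ : Measure G} [μ.IsAddRightInvariant]
    [NormedAddCommGroup E] {w : G → E} {s : Set G} (hw : IntegrableOn w s μ) (z : G) :
    IntegrableOn (fun y => w (y + z)) ((· + z) ⁻¹' s) μ :=
  (measurePreserving_add_right μ z).integrableOn_comp_preimage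
    (measurableEmbedding_addRight z) |>.mpr hw

theorem setLIntegral_setLIntegral_mul_sub_le_inner {s t : Set ℝ} {g K : ℝ → ℝ≥0∞}
    (hg : Measurable g) (hK : Measurable K) :
    ∫⁻ y in t, ∫⁻ x in s, g x * K (x - y) ≤ (∫⁻ x in s, g x) * ∫⁻ z, K z := by
  rw [lintegral_lintegral_swap (by fun_prop), ← lintegral_mul_const _ hg]
  refine lintegral_mono fun x => ?_
  rw [lintegral_const_mul _ (by fun_prop), ← lintegral_sub_left_eq_self K x]
  gcongr
  exact Measure.restrict_le_self

theorem setLIntegral_setLIntegral_mul_sub_le_outer {s t : Set ℝ} {g K : ℝ → ℝ≥0∞}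
    (hg : AEMeasurable g (volume.restrict t)) (hK : Measurable K) :
    ∫⁻ y in t, ∫⁻ x in s, g y * K (x - y) ≤ (∫⁻ y in t, g y) * ∫⁻ z, K z := by
  rw [← lintegral_mul_const'' _ hg]
  refine lintegral_mono fun y => ?_
  rw [lintegral_const_mul _ (by fun_prop), ← lintegral_sub_right_eq_self K y]
  gcongr
  exact Measure.restrict_le_self

theorem setLIntegral_Iic_Iic_abs_sub_mul_le_modulus {ε μw : ℝ} {w ω : ℝ → ℝ}
    (hw : Measurable w) (hw_int : IntegrableOn w (Iic 0)) (hω : Measurable ω)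
    (hω_supp : ∀ x, ε < |x| → ω x = 0)
    (hμw : ∀ z : ℝ, |z| ≤ ε →
      ∫ x in {x : ℝ | x ≤ 0 ∧ x + z ≤ 0}, |w (x + z) - w x| ≤ μw) :
    ∫⁻ y in Iic 0, ∫⁻ x in Iic 0, ENNReal.ofReal |w x - w y| * ENNReal.ofReal (ω (x - y)) ≤
      ENNReal.ofReal μw * ∫⁻ z, ENNReal.ofReal (ω z) := by
  let S : ℝ → Set ℝ := fun z => {y | y ≤ 0 ∧ y + z ≤ 0}
  let F : ℝ → ℝ → ℝ≥0∞ := fun y z =>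
    (S z).indicator (fun y => ENNReal.ofReal |w (y + z) - w y|) y * ENNReal.ofReal (ω z)
  have hS : ∀ z, MeasurableSet (S z) := fun z =>
    measurableSet_Iic.inter (measurableSet_le (measurable_add_const z) measurable_const)
  have hF : Measurable (Function.uncurry F) := by
    have hS2 : MeasurableSet {p : ℝ × ℝ | p.1 ≤ 0 ∧ p.1 + p.2 ≤ 0} :=
      (measurableSet_le measurable_fst measurable_const).inter
        (measurableSet_le (measurable_fst.add measurable_snd) measurable_const)
    change Measurable fun p : ℝ × ℝ => {p : ℝ × ℝ | p.1 ≤ 0 ∧ p.1 + p.2 ≤ 0}.indicator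
      (fun p => ENNReal.ofReal |w (p.1 + p.2) - w p.1|) p * ENNReal.ofReal (ω p.2)
    exact (Measurable.indicator (by fun_prop) hS2).mul (by fun_prop)
  have hsubst : ∀ y ∈ Iic (0 : ℝ), ∫⁻ x in Iic 0,
      ENNReal.ofReal |w x - w y| * ENNReal.ofReal (ω (x - y)) = ∫⁻ z, F y z := by
    intro y hy
    rw [← lintegral_indicator measurableSet_Iic, ← lintegral_add_left_eq_self _ y]
    refine lintegral_congr fun z => ?_
    by_cases hz : y + z ≤ 0
    · simp [F, S, indicator, hz, mem_Iic.mp hy]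
    · simp [F, S, indicator, hz]
  have hslice : ∀ z, ∫⁻ y in Iic 0, F y z ≤ ENNReal.ofReal μw * ENNReal.ofReal (ω z) := by
    intro z
    by_cases hωz : ω z = 0
    · simp [F, hωz]
    have hz : |z| ≤ ε := not_lt.mp fun h => hωz (hω_supp z h)
    have hint : IntegrableOn (fun y => w (y + z) - w y) (S z) :=
      ((hw_int.comp_add_right z).mono_set fun _ hy => hy.2).sub
        (hw_int.mono_set fun _ hy => hy.1)
    calc ∫⁻ y in Iic 0, F y z ≤ ∫⁻ y, F y z := setLIntegral_le_lintegral _ _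
      _ = (∫⁻ y in S z, ENNReal.ofReal |w (y + z) - w y|) * ENNReal.ofReal (ω z) := by
        rw [lintegral_mul_const' _ _ ENNReal.ofReal_ne_top, lintegral_indicator (hS z)]
      _ ≤ _ := by gcongr; exact lintegral_ofReal_abs_le_of_integral_le hint (hμw z hz)
  calc _ = ∫⁻ y in Iic 0, ∫⁻ z, F y z := setLIntegral_congr_fun measurableSet_Iic hsubst
    _ = ∫⁻ z, ∫⁻ y in Iic 0, F y z := lintegral_lintegral_swap hF.aemeasurable
    _ ≤ ∫⁻ z, ENNReal.ofReal μw * ENNReal.ofReal (ω z) := lintegral_mono hslice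
    _ = _ := lintegral_const_mul' _ _ ENNReal.ofReal_ne_top

theorem setLIntegral_Iic_Iic_abs_sub_mul_le_dist_add_moduli {ε μg νg : ℝ} {ω : ℝ → ℝ}
    (hω : Measurable ω) (hω_supp : ∀ x, ε < |x| → ω x = 0)
    (hω_one : ∫⁻ z, ENNReal.ofReal (ω z) = 1) {f g h : ℝ → ℝ}
    (hf : Measurable f) (hg : Measurable g) (hf_int : IntegrableOn f (Iic 0))
    (hg_int : IntegrableOn g (Iic 0)) (hh_int : IntegrableOn h (Iic 0))
    (hμg : ∀ z : ℝ, |z| ≤ ε →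
      ∫ x in {x : ℝ | x ≤ 0 ∧ x + z ≤ 0}, |g (x + z) - g x| ≤ μg)
    (hνg : ∫ x in Iic 0, |h x - g x| ≤ νg) :
    ∫⁻ y in Iic 0, ∫⁻ x in Iic 0, ENNReal.ofReal (|f x - h y| * ω (x - y)) ≤
      ENNReal.ofReal (∫ x in Iic 0, |f x - g x|) + ENNReal.ofReal μg + ENNReal.ofReal νg := by
  have hK : Measurable fun z => ENNReal.ofReal (ω z) := by fun_prop
  calc _ ≤ ∫⁻ y in Iic 0, ∫⁻ x in Iic 0,
        (ENNReal.ofReal |f x - g x| * ENNReal.ofReal (ω (x - y)) +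
          (ENNReal.ofReal |g x - g y| * ENNReal.ofReal (ω (x - y)) +
            ENNReal.ofReal |g y - h y| * ENNReal.ofReal (ω (x - y)))) :=
        lintegral_mono fun y => lintegral_mono fun x => ENNReal.ofReal_abs_sub_mul_le_add _ _ _ _ _
    _ = _ := by
        rw [lintegral_lintegral_add_left (by fun_prop), lintegral_lintegral_add_left (by fun_prop)]
    _ ≤ (∫⁻ x in Iic 0, ENNReal.ofReal |f x - g x|) * 1 +
          (ENNReal.ofReal μg * 1 + (∫⁻ y in Iic 0, ENNReal.ofReal |g y - h y|) * 1) := by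
        rw [← hω_one]
        gcongr
        · exact setLIntegral_setLIntegral_mul_sub_le_inner (by fun_prop) hK
        · exact setLIntegral_Iic_Iic_abs_sub_mul_le_modulus hg hg_int hω hω_supp hμg
        · exact setLIntegral_setLIntegral_mul_sub_le_outer
            (hg_int.sub hh_int).abs.aemeasurable.ennreal_ofReal hK
    _ ≤ _ := by
        simp only [mul_one, ← add_assoc]
        gcongr
        · exact lintegral_ofReal_abs_le_of_integral_le (hf_int.sub hg_int) le_rfl
        · refine lintegral_ofReal_abs_le_of_integral_le (hg_int.sub hh_int) ?_
          simpa only [abs_sub_comm] using hνg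

/-- `μu, μv` and `νu, νv` are upper bounds for the spatial moduli `μ(u(·,0), ε)`,
`μ(v(·,0), ε)` and the temporal moduli `ν₀(u, ε₀)`, `ν₀(v, ε₀)`. -/
theorem kuznetsov_initial_term_estimate_general
    (T ε ε₀ : ℝ) (hT : 0 < T) (hε : 0 < ε) (hε₀ : 0 < ε₀)
    (ωε ωε₀ : ℝ → ℝ)
    (hωε_meas : Measurable ωε)
    (hωε_nonneg : ∀ x, 0 ≤ ωε x) (hωε₀_nonneg : ∀ x, 0 ≤ ωε₀ x)
    (hωε₀_even : ∀ x, ωε₀ (-x) = ωε₀ x)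
    (hωε_supp : ∀ x : ℝ, ε < |x| → ωε x = 0)
    (hωε₀_supp : ∀ x : ℝ, ε₀ < |x| → ωε₀ x = 0)
    (hωε_int : ∫ x, ωε x = 1) (hωε₀_int : ∫ x, ωε₀ x = 1)
    (u v : ℝ → ℝ → ℝ)
    (hu_meas : Measurable (Function.uncurry u))
    (hv_meas : Measurable (Function.uncurry v))
    (hu_int : ∀ t ∈ Set.Icc (0 : ℝ) T, IntegrableOn (fun x => u x t) (Set.Iic 0))
    (hv_int : ∀ t ∈ Set.Icc (0 : ℝ) T, IntegrableOn (fun x => v x t) (Set.Iic 0))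
    (μu μv νu νv : ℝ)
    (hμu : ∀ z : ℝ, |z| ≤ ε →
      ∫ x in {x : ℝ | x ≤ 0 ∧ x + z ≤ 0}, |u (x + z) 0 - u x 0| ≤ μu)
    (hμv : ∀ z : ℝ, |z| ≤ ε →
      ∫ x in {x : ℝ | x ≤ 0 ∧ x + z ≤ 0}, |v (x + z) 0 - v x 0| ≤ μv)
    (hνu : ∀ s : ℝ, 0 ≤ s → s ≤ min ε₀ T →
      ∫ x in Set.Iic (0 : ℝ), |u x s - u x 0| ≤ νu)
    (hνv : ∀ s : ℝ, 0 ≤ s → s ≤ min ε₀ T →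
      ∫ x in Set.Iic (0 : ℝ), |v x s - v x 0| ≤ νv) :
    (∫⁻ s in Set.Icc (0 : ℝ) T, ∫⁻ y in Set.Iic (0 : ℝ), ∫⁻ x in Set.Iic (0 : ℝ),
        ENNReal.ofReal
          ((|u x 0 - v y s| + |v x 0 - u y s|) * ωε (x - y) * ωε₀ s)) ≤
      ENNReal.ofReal
        ((∫ x in Set.Iic (0 : ℝ), |u x 0 - v x 0|)
          + (1 / 2) * (νu + μu + νv + μv)) := by
  have h0 : (0 : ℝ) ∈ Icc 0 T := ⟨le_rfl, hT.le⟩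
  have hu : ∀ t, Measurable fun x => u x t := fun t => hu_meas.comp measurable_prodMk_right
  have hv : ∀ t, Measurable fun x => v x t := fun t => hv_meas.comp measurable_prodMk_right
  have hωε_one := lintegral_ofReal_eq_one_of_integral_eq_one hωε_nonneg hωε_int
  have hμu0 : 0 ≤ μu := by simpa using hμu 0 (by simp [hε.le])
  have hμv0 : 0 ≤ μv := by simpa using hμv 0 (by simp [hε.le])
  have hνu0 : 0 ≤ νu := by simpa using hνu 0 le_rfl (le_min hε₀.le hT.le)
  have hνv0 : 0 ≤ νv := by simpa using hνv 0 le_rfl (le_min hε₀.le hT.le)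
  set L := ∫ x in Iic 0, |u x 0 - v x 0|
  have hL0 : 0 ≤ L := integral_nonneg fun _ => abs_nonneg _
  have hL : ∫ x in Iic 0, |v x 0 - u x 0| = L := by simp only [L, abs_sub_comm]
  set C := ENNReal.ofReal L + ENNReal.ofReal μv + ENNReal.ofReal νv +
    (ENNReal.ofReal L + ENNReal.ofReal μu + ENNReal.ofReal νu)
  set D : (ℝ → ℝ → ℝ) → (ℝ → ℝ → ℝ) → ℝ → ℝ≥0∞ := fun a b s =>
    ∫⁻ y in Iic 0, ∫⁻ x in Iic 0, ENNReal.ofReal (|a x 0 - b y s| * ωε (x - y))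
  have hslice : ∀ s ∈ Icc 0 T,
      (D u v s + D v u s) * ENNReal.ofReal (ωε₀ s) ≤ C * ENNReal.ofReal (ωε₀ s) := by
    intro s hs
    by_cases hω0 : ωε₀ s = 0
    · simp [hω0]
    have hs_le : s ≤ min ε₀ T :=
      le_min (not_lt.mp fun h => hω0 (hωε₀_supp s (by rwa [abs_of_nonneg hs.1]))) hs.2
    gcongr
    refine add_le_add ?_ (hL ▸ ?_)
    · exact setLIntegral_Iic_Iic_abs_sub_mul_le_dist_add_moduli hωε_meas hωε_supp hωε_one
        (hu 0) (hv 0) (hu_int 0 h0) (hv_int 0 h0) (hv_int s hs) hμv (hνv s hs.1 hs_le)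
    · exact setLIntegral_Iic_Iic_abs_sub_mul_le_dist_add_moduli hωε_meas hωε_supp hωε_one
        (hv 0) (hu 0) (hv_int 0 h0) (hu_int 0 h0) (hu_int s hs) hμu (hνu s hs.1 hs_le)
  calc _ = ∫⁻ s in Icc 0 T, (D u v s + D v u s) * ENNReal.ofReal (ωε₀ s) :=
        lintegral_congr fun s => lintegral_lintegral_ofReal_add_mul_mul (fun _ _ => abs_nonneg _)
          (fun _ _ => abs_nonneg _) (fun _ _ => hωε_nonneg _) (by fun_prop) (ωε₀ s)
    _ ≤ ∫⁻ s in Icc 0 T, C * ENNReal.ofReal (ωε₀ s) := setLIntegral_mono' measurableSet_Icc hslice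
    _ = C * ∫⁻ s in Icc 0 T, ENNReal.ofReal (ωε₀ s) := lintegral_const_mul' _ _ (by simp [C])
    _ ≤ C * 2⁻¹ := by
        gcongr
        exact setLIntegral_ofReal_le_inv_two_of_even hωε₀_nonneg hωε₀_even hωε₀_int
          Icc_subset_Ici_self
    _ = _ := by
        rw [show L + 1 / 2 * (νu + μu + νv + μv) = (L + μv + νv + (L + μu + νu)) * 2⁻¹ by ring,
          ENNReal.ofReal_mul (by linarith), ENNReal.ofReal_inv_of_pos two_pos,
          ENNReal.ofReal_ofNat]
        repeat rw [ENNReal.ofReal_add (by linarith) (by linarith)]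

/-- estimate for the initial-time term in the Kuznetsov
doubling-of-variables argument on the half-line `(-∞, 0]`.  Here `μu, μv`
are upper bounds for the spatial moduli of continuity `μ(u(·,0), ε)`,
`μ(v(·,0), ε)` and `νu, νv` are upper bounds for the temporal moduli
`ν₀(u, ε₀)`, `ν₀(v, ε₀)`. -/
theorem kuznetsov_initial_term_estimate
    (T ε ε₀ : ℝ) (hT : 0 < T) (hε : 0 < ε) (hε₀ : 0 < ε₀)
    (ωε ωε₀ : ℝ → ℝ)
    (hωε_meas : Measurable ωε) (hωε₀_meas : Measurable ωε₀)
    (hωε_nonneg : ∀ x, 0 ≤ ωε x) (hωε₀_nonneg : ∀ x, 0 ≤ ωε₀ x)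
    (hωε_even : ∀ x, ωε (-x) = ωε x) (hωε₀_even : ∀ x, ωε₀ (-x) = ωε₀ x)
    (hωε_supp : ∀ x : ℝ, ε < |x| → ωε x = 0)
    (hωε₀_supp : ∀ x : ℝ, ε₀ < |x| → ωε₀ x = 0)
    (hωε_int : ∫ x, ωε x = 1) (hωε₀_int : ∫ x, ωε₀ x = 1)
    (u v : ℝ → ℝ → ℝ)
    (hu_meas : Measurable (Function.uncurry u))
    (hv_meas : Measurable (Function.uncurry v))
    (hu_int : ∀ t ∈ Set.Icc (0 : ℝ) T, IntegrableOn (fun x => u x t) (Set.Iic 0))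
    (hv_int : ∀ t ∈ Set.Icc (0 : ℝ) T, IntegrableOn (fun x => v x t) (Set.Iic 0))
    (μu μv νu νv : ℝ)
    (hμu : ∀ z : ℝ, |z| ≤ ε →
      ∫ x in {x : ℝ | x ≤ 0 ∧ x + z ≤ 0}, |u (x + z) 0 - u x 0| ≤ μu)
    (hμv : ∀ z : ℝ, |z| ≤ ε →
      ∫ x in {x : ℝ | x ≤ 0 ∧ x + z ≤ 0}, |v (x + z) 0 - v x 0| ≤ μv)
    (hνu : ∀ s : ℝ, 0 ≤ s → s ≤ min ε₀ T →
      ∫ x in Set.Iic (0 : ℝ), |u x s - u x 0| ≤ νu)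
    (hνv : ∀ s : ℝ, 0 ≤ s → s ≤ min ε₀ T →
      ∫ x in Set.Iic (0 : ℝ), |v x s - v x 0| ≤ νv) :
    (∫⁻ s in Set.Icc (0 : ℝ) T, ∫⁻ y in Set.Iic (0 : ℝ), ∫⁻ x in Set.Iic (0 : ℝ),
        ENNReal.ofReal
          ((|u x 0 - v y s| + |v x 0 - u y s|) * ωε (x - y) * ωε₀ s)) ≤
      ENNReal.ofReal
        ((∫ x in Set.Iic (0 : ℝ), |u x 0 - v x 0|)
          + (1 / 2) * (νu + μu + νv + μv)) :=
  kuznetsov_initial_term_estimate_general T ε ε₀ hT hε hε₀ ωε ωε₀ hωε_meas hωε_nonneg hωε₀_nonneg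
    hωε₀_even hωε_supp hωε₀_supp hωε_int hωε₀_int u v hu_meas hv_meas hu_int hv_int μu μv νu νv hμu
    hμv hνu hνv
end

section
/- Let λ > 0 and let f : ℝ → ℝ be monotone and CFL-compatible for λ. Let u : ℤ × ℕ → ℝ (written u_j^n) satisfy the upwind relation u_j^{n+1} = u_j^n − λ(f(u_j^n) − f(u_{j−1}^n)) for all columns j ≥ 1 and all n ≥ 0, where the boundary column (u_0^n)_{n≥0} is prescribed arbitrarily. Suppose V₀ ≥ 0 is such that ∑_{i=a}^{b} |u_i^0 − u_{i−1}^0| ≤ V₀ for all integers 1 ≤ a ≤ b, and suppose V_a ≥ 0 is such that ∑_{n=0}^{M'} |u_0^{n+1} − u_0^n| ≤ V_a for every M' ∈ ℕ. Then for every j ≥ 1 and every M ∈ ℕ, the temporal variation satisfies ∑_{n=0}^{M} |u_j^{n+1} − u_j^n| ≤ V₀ + V_a. -/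
/-!
The upwind update writes `u_j^{n+1}` as `g(u_j^n) + λ f(u_{j-1}^n)` with both `g = id - λ f` and
`λ f` nondecreasing, so every increment `b - a` splits into two increments of the same sign and
`|b - a| = |g b - g a| + λ |f b - f a|`. Since `|u_j^{n+1} - u_j^n| = λ |f(u_j^n) - f(u_{j-1}^n)|`,
this gives, column by column,
`|u_j^{n+1} - u_j^n| + |u_j^{n+1} - u_{j-1}^{n+1}| ≤ |u_j^n - u_{j-1}^n| + |u_{j-1}^{n+1} - u_{j-1}^n|`.
Summing over `1 ≤ i ≤ j` shows that the temporal increment in column `j` plus the spatial variation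
at time `n + 1` is at most the spatial variation at time `n` plus the boundary increment; summing
over `n` then telescopes the spatial variations down to the initial one.
-/

open Finset

section Telescoping

variable {α : Type*} [AddCommMonoid α] [PartialOrder α] [IsOrderedAddMonoid α]

theorem sum_range_add_le_add_sum_range {x y z : ℕ → α}
    (h : ∀ n, x n + y (n + 1) ≤ y n + z n) (N : ℕ) :
    ∑ n ∈ range N, x n + y N ≤ y 0 + ∑ n ∈ range N, z n := by
  induction N with
  | zero => simp
  | succ N ih =>
    calc ∑ n ∈ range (N + 1), x n + y (N + 1)
        = ∑ n ∈ range N, x n + (x N + y (N + 1)) := by rw [sum_range_succ, add_assoc]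
      _ ≤ ∑ n ∈ range N, x n + (y N + z N) := add_le_add_right (h N) _
      _ = (∑ n ∈ range N, x n + y N) + z N := by rw [add_assoc]
      _ ≤ (y 0 + ∑ n ∈ range N, z n) + z N := add_le_add_left ih _
      _ = y 0 + ∑ n ∈ range (N + 1), z n := by rw [sum_range_succ, add_assoc]

theorem add_sum_Icc_le_sum_Icc_add {e s t : ℤ → α}
    (h : ∀ j, 1 ≤ j → e j + s j ≤ t j + e (j - 1)) {J : ℤ} (hJ : 0 ≤ J) :
    e J + ∑ j ∈ Icc 1 J, s j ≤ ∑ j ∈ Icc 1 J, t j + e 0 := by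
  induction J, hJ using Int.leInduction with
  | base => simp
  | succ J hJ ih =>
    have hIcc : Icc 1 (J + 1) = insert (J + 1) (Icc 1 J) :=
      (insert_Icc_right_eq_Icc_add_one (by omega)).symm
    have hnot : J + 1 ∉ Icc 1 J := by simp
    rw [hIcc, sum_insert hnot, sum_insert hnot]
    calc e (J + 1) + (s (J + 1) + ∑ j ∈ Icc 1 J, s j)
        = (e (J + 1) + s (J + 1)) + ∑ j ∈ Icc 1 J, s j := by rw [add_assoc]
      _ ≤ (t (J + 1) + e J) + ∑ j ∈ Icc 1 J, s j := by
          simpa using add_le_add_left (h (J + 1) (by omega)) (∑ j ∈ Icc 1 J, s j)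
      _ = t (J + 1) + (e J + ∑ j ∈ Icc 1 J, s j) := by rw [add_assoc]
      _ ≤ t (J + 1) + (∑ j ∈ Icc 1 J, t j + e 0) := add_le_add_right ih _
      _ = t (J + 1) + ∑ j ∈ Icc 1 J, t j + e 0 := by rw [add_assoc]

end Telescoping

theorem abs_add_sub_eq_of_monotone {g h : ℝ → ℝ} (hg : Monotone g) (hh : Monotone h) (a b : ℝ) :
    |g b + h b - (g a + h a)| = |g b - g a| + |h b - h a| := by
  rw [show g b + h b - (g a + h a) = (g b - g a) + (h b - h a) by ring, abs_add_eq_add_abs_iff]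
  rcases le_total a b with hab | hba
  · exact Or.inl ⟨sub_nonneg.2 (hg hab), sub_nonneg.2 (hh hab)⟩
  · exact Or.inr ⟨sub_nonpos.2 (hg hba), sub_nonpos.2 (hh hba)⟩

def IsMonotoneCFL (lam : ℝ) (f : ℝ → ℝ) : Prop :=
  ∀ a b : ℝ, a ≤ b → 0 ≤ f b - f a ∧ f b - f a ≤ (b - a) / lam

namespace IsMonotoneCFL

variable {lam : ℝ} {f : ℝ → ℝ}

theorem monotone_const_mul (hlam : 0 < lam) (hf : IsMonotoneCFL lam f) : Monotone (fun x ↦ lam * f x) :=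
  fun a b hab ↦ mul_le_mul_of_nonneg_left (sub_nonneg.1 (hf a b hab).1) hlam.le

theorem monotone_sub_const_mul (hlam : 0 < lam) (hf : IsMonotoneCFL lam f) :
    Monotone (fun x ↦ x - lam * f x) :=
  fun a b hab ↦ by
    have := (le_div_iff₀' hlam).1 (hf a b hab).2
    dsimp only
    linarith

theorem abs_sub_eq (hlam : 0 < lam) (hf : IsMonotoneCFL lam f) (a b : ℝ) :
    |b - a| = |(b - lam * f b) - (a - lam * f a)| + lam * |f b - f a| := by
  have := abs_add_sub_eq_of_monotone (hf.monotone_sub_const_mul hlam) (hf.monotone_const_mul hlam) a b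
  simp only [sub_add_cancel] at this
  rw [this, ← mul_sub, abs_mul, abs_of_pos hlam]

theorem abs_upwind_update_add_abs_le (hlam : 0 < lam) (hf : IsMonotoneCFL lam f)
    {ul ur ul' ur' : ℝ} (hupd : ur' = ur - lam * (f ur - f ul)) :
    |ur' - ur| + |ur' - ul'| ≤ |ur - ul| + |ul' - ul| := by
  have htime : |ur' - ur| = lam * |f ur - f ul| := by
    rw [hupd, sub_sub_cancel_left, abs_neg, abs_mul, abs_of_pos hlam]
  have hspace : |ur' - ul'| ≤ |(ur - lam * f ur) - (ul - lam * f ul)| + |ul' - ul| := by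
    rw [show ur' - ul' = ((ur - lam * f ur) - (ul - lam * f ul)) - (ul' - ul) by rw [hupd]; ring]
    exact abs_sub _ _
  linarith [hf.abs_sub_eq hlam ul ur]

end IsMonotoneCFL

noncomputable def spatialVariation (u : ℤ × ℕ → ℝ) (J : ℤ) (n : ℕ) : ℝ :=
  ∑ i ∈ Icc 1 J, |u (i, n) - u (i - 1, n)|

theorem spatialVariation_nonneg (u : ℤ × ℕ → ℝ) (J : ℤ) (n : ℕ) : 0 ≤ spatialVariation u J n :=
  sum_nonneg fun _ _ ↦ abs_nonneg _

theorem upwind_abs_sub_add_spatialVariation_le {lam : ℝ} (hlam : 0 < lam) {f : ℝ → ℝ}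
    (hf : IsMonotoneCFL lam f) {u : ℤ × ℕ → ℝ}
    (hscheme : ∀ j : ℤ, 1 ≤ j → ∀ n : ℕ,
      u (j, n + 1) = u (j, n) - lam * (f (u (j, n)) - f (u (j - 1, n))))
    {J : ℤ} (hJ : 0 ≤ J) (n : ℕ) :
    |u (J, n + 1) - u (J, n)| + spatialVariation u J (n + 1) ≤
      spatialVariation u J n + |u (0, n + 1) - u (0, n)| :=
  add_sum_Icc_le_sum_Icc_add (e := fun j ↦ |u (j, n + 1) - u (j, n)|)
    (s := fun j ↦ |u (j, n + 1) - u (j - 1, n + 1)|) (t := fun j ↦ |u (j, n) - u (j - 1, n)|)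
    (fun j hj ↦ hf.abs_upwind_update_add_abs_le hlam (hscheme j hj n)) hJ

theorem upwind_IBVP_temporal_variation_bound_general
    (lam : ℝ) (hlam : 0 < lam) (f : ℝ → ℝ)
    (hf : ∀ a b : ℝ, a ≤ b → 0 ≤ f b - f a ∧ f b - f a ≤ (b - a) / lam)
    (u : ℤ × ℕ → ℝ)
    (hscheme : ∀ j : ℤ, 1 ≤ j → ∀ n : ℕ,
      u (j, n + 1) = u (j, n) - lam * (f (u (j, n)) - f (u (j - 1, n))))
    (V₀ : ℝ)
    (hTV₀ : ∀ a b : ℤ, 1 ≤ a → a ≤ b →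
      ∑ i ∈ Finset.Icc a b, |u (i, 0) - u (i - 1, 0)| ≤ V₀)
    (Va : ℝ)
    (hTVa : ∀ M' : ℕ,
      ∑ n ∈ Finset.range (M' + 1), |u (0, n + 1) - u (0, n)| ≤ Va) :
    ∀ j : ℤ, 1 ≤ j → ∀ M : ℕ,
      ∑ n ∈ Finset.range (M + 1), |u (j, n + 1) - u (j, n)| ≤ V₀ + Va := by
  intro j hj M
  have htelescope := sum_range_add_le_add_sum_range
    (upwind_abs_sub_add_spatialVariation_le hlam hf hscheme (by omega : 0 ≤ j)) (M + 1)
  have hinitial : spatialVariation u j 0 ≤ V₀ := hTV₀ 1 j le_rfl hj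
  linarith [spatialVariation_nonneg u j (M + 1), hTVa M]

/-- temporal total variation bound for the upwind scheme on the
quarter plane with prescribed BV boundary data in the boundary column `j = 0`:
the temporal variation of every column `j ≥ 1` is bounded by the discrete
total variation `V₀` of the initial data plus the temporal variation bound
`V_a` of the boundary column. -/
theorem upwind_IBVP_temporal_variation_bound
    (lam : ℝ) (hlam : 0 < lam) (f : ℝ → ℝ)
    (hf : ∀ a b : ℝ, a ≤ b → 0 ≤ f b - f a ∧ f b - f a ≤ (b - a) / lam)
    (u : ℤ × ℕ → ℝ)
    (hscheme : ∀ j : ℤ, 1 ≤ j → ∀ n : ℕ,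
      u (j, n + 1) = u (j, n) - lam * (f (u (j, n)) - f (u (j - 1, n))))
    (V₀ : ℝ) (hV₀ : 0 ≤ V₀)
    (hTV₀ : ∀ a b : ℤ, 1 ≤ a → a ≤ b →
      ∑ i ∈ Finset.Icc a b, |u (i, 0) - u (i - 1, 0)| ≤ V₀)
    (Va : ℝ) (hVa : 0 ≤ Va)
    (hTVa : ∀ M' : ℕ,
      ∑ n ∈ Finset.range (M' + 1), |u (0, n + 1) - u (0, n)| ≤ Va) :
    ∀ j : ℤ, 1 ≤ j → ∀ M : ℕ,
      ∑ n ∈ Finset.range (M + 1), |u (j, n + 1) - u (j, n)| ≤ V₀ + Va :=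
  upwind_IBVP_temporal_variation_bound_general lam hlam f hf u hscheme V₀ hTV₀ Va hTVa
end
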